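/- arXiv:1412.7670 — 4 statements merged into one kernel-verified Lean document; each statement's English description precedes it below -/
import Mathlib

section
/- Every finite k-HST with k > 17 admits an embedding with distortion at most 16k/(k−17) into every real Banach space X with dim X ≥ log₂ D, where D is the maximal out-degree of a vertex in the rooted tree defining the k-HST. -/
/-!
Label every non-root vertex `u` by a point `P u` of the unit ball of `X` so that siblings get
points at mutual distance at least `1/2`: a volume argument gives `2 ^ n` such points in any
`n`-dimensional subspace, and `2 ^ ⌈log₂ D⌉ ≥ D`. Map a vertex `z` to the sum of `Δ (par u) • P u`
over the vertices `u ≠ root` on its path to the root. For leaves `x ≠ y` with least common ancestor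
`w`, reached through children `a ≠ b` of `w`, the difference of the images is `Δ w • (P a - P b)`
up to the contributions of the edges below `a` and `b`, each of norm at most `Δ w / (k - 1)`
because the labels decay geometrically. This gives distortion `4k/(k-5) ≤ 16k/(k-17)`.
-/

noncomputable section

namespace Stmt

/-- `embedsM K dV dY` : there is a map of distortion at most `K` from the space with distance
function `dV` to the space with distance function `dY`. -/
def embedsM {V Y : Type*} (K : ℝ) (dV : V → V → ℝ) (dY : Y → Y → ℝ) : Prop :=
  ∃ f : V → Y, Function.Injective f ∧ ∃ r : ℝ, 0 < r ∧
    ∀ a b, r * dV a b ≤ dY (f a) (f b) ∧ dY (f a) (f b) ≤ K * (r * dV a b)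

/-- In a rooted tree given by a parent function, `v` is a leaf if it has no children. -/
def IsLeaf {T : Type*} (par : T → T) (v : T) : Prop := ∀ u, u ≠ v → par u ≠ v

/-- `w` is an ancestor of `v` (possibly `w = v`). -/
def IsAnc {T : Type*} (par : T → T) (w v : T) : Prop := ∃ m : ℕ, par^[m] v = w

/-- `w` is the least common ancestor of `x` and `y`. -/
def IsLCA {T : Type*} (par : T → T) (w x y : T) : Prop :=
  IsAnc par w x ∧ IsAnc par w y ∧ ∀ u, IsAnc par u x → IsAnc par u y → IsAnc par u w

/-- The maximal out-degree of a vertex of the rooted tree with parent function `par`. -/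
def maxOutDegree {T : Type*} [Fintype T] (par : T → T) : ℕ :=
  Finset.univ.sup fun v => Nat.card { u : T // u ≠ v ∧ par u = v }

open Finset MeasureTheory Metric Module

theorem embedsM.mono {V Y : Type*} {K K' : ℝ} {dV : V → V → ℝ} {dY : Y → Y → ℝ}
    (h : embedsM K dV dY) (hK : 0 < K) (hKK' : K ≤ K') (hdY : ∀ a b, 0 ≤ dY a b) :
    embedsM K' dV dY := by
  obtain ⟨f, hf, r, hr, hfr⟩ := h
  refine ⟨f, hf, r, hr, fun a b => ⟨(hfr a b).1, ?_⟩⟩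
  have hrd : 0 ≤ r * dV a b := nonneg_of_mul_nonneg_right ((hdY _ _).trans (hfr a b).2) hK
  exact (hfr a b).2.trans (mul_le_mul_of_nonneg_right hKK' hrd)

theorem exists_norm_le_one_forall_lt_norm_sub {E : Type*} [NormedAddCommGroup E]
    [NormedSpace ℝ E] [FiniteDimensional ℝ E] (S : Finset E) (hS : #S < 2 ^ finrank ℝ E) :
    ∃ y : E, ‖y‖ ≤ 1 ∧ ∀ x ∈ S, 1 / 2 < ‖y - x‖ := by
  borelize E
  by_contra! hcover
  set μ : Measure E := Measure.addHaar
  set B := μ.real (closedBall (0 : E) 1)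
  have hB : 0 < B :=
    ENNReal.toReal_pos (measure_closedBall_pos μ 0 one_pos).ne' measure_closedBall_lt_top.ne
  have hsub : closedBall (0 : E) 1 ⊆ ⋃ x ∈ S, closedBall x (1 / 2) := fun y hy => by
    obtain ⟨x, hx, hxy⟩ := hcover y (by simpa using hy)
    exact Set.mem_biUnion hx (by rwa [mem_closedBall, dist_eq_norm])
  have hvol : B ≤ #S * ((1 / 2) ^ finrank ℝ E * B) := calc
    B ≤ μ.real (⋃ x ∈ S, closedBall x (1 / 2)) :=
      measureReal_mono hsub
        (measure_biUnion_lt_top S.finite_toSet fun _ _ => measure_closedBall_lt_top).ne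
    _ ≤ ∑ x ∈ S, μ.real (closedBall x (1 / 2)) := measureReal_biUnion_finset_le S _
    _ = #S * ((1 / 2) ^ finrank ℝ E * B) := by
      simp only [Measure.addHaar_real_closedBall' μ _ (by norm_num : (0 : ℝ) ≤ 1 / 2),
        sum_const, nsmul_eq_mul, B]
  have hcard : (#S : ℝ) * (1 / 2) ^ finrank ℝ E < 1 := by
    rw [one_div_pow, mul_one_div, div_lt_one (by positivity)]
    exact_mod_cast hS
  nlinarith

theorem exists_finset_separated_of_le_two_pow_finrank {E : Type*} [NormedAddCommGroup E]
    [NormedSpace ℝ E] [FiniteDimensional ℝ E] {j : ℕ} (hj : j ≤ 2 ^ finrank ℝ E) :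
    ∃ S : Finset E, #S = j ∧ (∀ x ∈ S, ‖x‖ ≤ 1) ∧
      (S : Set E).Pairwise fun x y => 1 / 2 ≤ ‖x - y‖ := by
  classical
  induction j with
  | zero => exact ⟨∅, by simp⟩
  | succ j ih =>
    obtain ⟨S, hcard, hnorm, hsep⟩ := ih (by omega)
    obtain ⟨y, hy, hyS⟩ := exists_norm_le_one_forall_lt_norm_sub S (by omega)
    have hyS' : y ∉ S := fun h => by have := hyS y h; norm_num at this
    refine ⟨insert y S, by rw [card_insert_of_notMem hyS', hcard], ?_, ?_⟩
    · simpa [hy] using hnorm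
    · rw [coe_insert, Set.pairwise_insert_of_notMem hyS']
      exact ⟨hsep, fun x hx => ⟨(hyS x hx).le, by rw [norm_sub_rev]; exact (hyS x hx).le⟩⟩

theorem exists_finset_separated_of_le_rank {X : Type*} [NormedAddCommGroup X]
    [NormedSpace ℝ X] {n j : ℕ} (hn : (n : Cardinal) ≤ Module.rank ℝ X) (hj : j ≤ 2 ^ n) :
    ∃ S : Finset X, #S = j ∧ (∀ x ∈ S, ‖x‖ ≤ 1) ∧
      (S : Set X).Pairwise fun x y => 1 / 2 ≤ ‖x - y‖ := by
  obtain ⟨s, hs_card, hs_indep⟩ := le_rank_iff_exists_linearIndependent_finset.1 hn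
  let E := Submodule.span ℝ (s : Set X)
  have hE : finrank ℝ E = n := by rw [finrank_span_finset_eq_card hs_indep, hs_card]
  obtain ⟨S, hS_card, hS_norm, hS_sep⟩ :=
    exists_finset_separated_of_le_two_pow_finrank (E := E) (hE ▸ hj)
  refine ⟨S.map (Function.Embedding.subtype _), by rw [card_map, hS_card], ?_, ?_⟩
  · simpa using hS_norm
  · rw [coe_map, Function.Embedding.coe_subtype,
      Subtype.val_injective.injOn.pairwise_image]
    exact hS_sep

theorem exists_injOn_children {T α : Type*} [Fintype T] [Nonempty α] (par : T → T)
    {S : Set α} (hS : (maxOutDegree par : ℕ∞) ≤ S.encard) :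
    ∃ g : T → T → α, ∀ v, {u | u ≠ v ∧ par u = v} ⊆ g v ⁻¹' S ∧
      Set.InjOn (g v) {u | u ≠ v ∧ par u = v} := by
  have hchildren (v : T) : {u | u ≠ v ∧ par u = v}.encard ≤ S.encard := by
    refine le_trans ?_ hS
    rw [← (Set.toFinite _).cast_ncard_eq, ← Nat.card_coe_set_eq, Nat.cast_le]
    exact le_sup (f := fun v => Nat.card {u : T // u ≠ v ∧ par u = v}) (mem_univ v)
  choose g hg using fun v => (Set.toFinite _).exists_injOn_of_encard_le (hchildren v)
  exact ⟨g, hg⟩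

theorem exists_separated_labels {T X : Type*} [Fintype T] [NormedAddCommGroup X]
    [NormedSpace ℝ X] (par : T → T)
    (hdim : (⌈Real.logb 2 (maxOutDegree par : ℝ)⌉₊ : Cardinal) ≤ Module.rank ℝ X) :
    ∃ P : T → X, (∀ u, par u ≠ u → ‖P u‖ ≤ 1) ∧
      ∀ u u', par u ≠ u → par u' ≠ u' → par u = par u' → u ≠ u' → 1 / 2 ≤ ‖P u - P u'‖ := by
  have hD : maxOutDegree par ≤ 2 ^ ⌈Real.logb 2 (maxOutDegree par : ℝ)⌉₊ := by
    rw [show (2 : ℝ) = ((2 : ℕ) : ℝ) by norm_num, Real.natCeil_logb_natCast]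
    exact Nat.le_pow_clog one_lt_two _
  obtain ⟨S, hS_card, hS_norm, hS_sep⟩ := exists_finset_separated_of_le_rank hdim hD
  obtain ⟨g, hg⟩ := exists_injOn_children par (S := (S : Set X))
    (by rw [Set.encard_coe_eq_coe_finsetCard, hS_card])
  refine ⟨fun u => g (par u) u, fun u hu => hS_norm _ ((hg _).1 ⟨hu.symm, rfl⟩),
    fun u u' hu hu' hpar hne => ?_⟩
  have hu_child : u ∈ {c | c ≠ par u ∧ par c = par u} := ⟨hu.symm, rfl⟩
  have hu'_child : u' ∈ {c | c ≠ par u ∧ par c = par u} := ⟨hpar ▸ hu'.symm, hpar.symm⟩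
  dsimp only
  rw [← hpar]
  exact hS_sep ((hg _).1 hu_child) ((hg _).1 hu'_child)
    fun h => hne ((hg _).2 hu_child hu'_child h)

theorem sum_range_le_div_sub_one {a : ℕ → ℝ} {k : ℝ} (hk : 1 < k) (h0 : 0 ≤ a 0) {n : ℕ}
    (hgrow : ∀ i < n, k * a i ≤ a (i + 1)) : ∑ i ∈ range n, a i ≤ a n / (k - 1) := by
  induction n with
  | zero => simpa using div_nonneg h0 (by linarith)
  | succ n ih =>
    have hk1 : 0 < k - 1 := by linarith
    calc ∑ i ∈ range (n + 1), a i ≤ a n / (k - 1) + a n :=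
          by rw [sum_range_succ]; gcongr; exact ih fun i hi => hgrow i (by omega)
      _ = k * a n / (k - 1) := by field_simp; ring
      _ ≤ a (n + 1) / (k - 1) := by gcongr; exact hgrow n (by omega)

section RootedTree

variable {T : Type*} {par : T → T} {root : T}

theorem eq_root_of_iterate_eq_self (hroot : par root = root)
    (hreach : ∀ w, ∃ m, par^[m] w = root) {c : T} {n : ℕ} (hn : n ≠ 0)
    (h : par^[n] c = c) : c = root := by
  obtain ⟨m, hm⟩ := hreach c
  have hper : par^[n * m] c = c := (Function.IsPeriodicPt.mul_const h m).eq
  rw [← hper, ← Nat.sub_add_cancel (Nat.le_mul_of_pos_left m (Nat.pos_of_ne_zero hn)),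
    Function.iterate_add_apply, hm, Function.iterate_fixed hroot]

theorem parent_ne_self_of_ne_root (hroot : par root = root)
    (hreach : ∀ w, ∃ m, par^[m] w = root) {u : T} (hu : u ≠ root) : par u ≠ u :=
  fun h => hu (eq_root_of_iterate_eq_self hroot hreach one_ne_zero h)

theorem eq_of_isAnc_of_isLeaf {l z : T} (hl : IsLeaf par l) (h : IsAnc par l z) : z = l := by
  obtain ⟨m, hm⟩ := h
  induction m with
  | zero => exact hm
  | succ m ih =>
    rw [Function.iterate_succ_apply'] at hm
    exact ih (by_contra fun hne => hl _ hne hm)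

theorem exists_eq_parent_add {M : Type*} [AddCommMonoid M]
    (hreach : ∀ w, ∃ m, par^[m] w = root) (c : T → M) :
    ∃ F : T → M, ∀ z, z ≠ root → F z = F (par z) + c z := by
  classical
  refine ⟨fun z => ∑ i ∈ range (Nat.find (hreach z)), c (par^[i] z), fun z hz => ?_⟩
  dsimp only
  rw [Nat.find_comp_succ (hreach z) (hreach (par z)) hz, sum_range_succ']
  rfl

theorem eq_iterate_add_sum {M : Type*} [AddCommMonoid M] {F c : T → M}
    (hF : ∀ z, z ≠ root → F z = F (par z) + c z) {z : T} {n : ℕ}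
    (hn : ∀ i < n, par^[i] z ≠ root) :
    F z = F (par^[n] z) + ∑ i ∈ range n, c (par^[i] z) := by
  induction n with
  | zero => simp
  | succ n ih =>
    rw [ih fun i hi => hn i (by omega), hF _ (hn n (by omega)), sum_range_succ,
      ← Function.iterate_succ_apply' par n z, add_assoc, add_comm (c _)]

end RootedTree

section HST

variable {T : Type*} {par : T → T} {root : T} {Δ : T → ℝ} {k : ℝ}
  {X : Type*} [NormedAddCommGroup X] [NormedSpace ℝ X] {P F : T → X}

theorem norm_sum_smul_le_div_sub_one (hroot : par root = root)
    (hreach : ∀ w, ∃ m, par^[m] w = root) (hk : 1 < k) (hΔnonneg : ∀ w, 0 ≤ Δ w)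
    (hΔdecay : ∀ w, w ≠ root → Δ w ≤ Δ (par w) / k) (hP : ∀ u, par u ≠ u → ‖P u‖ ≤ 1)
    {z : T} {n : ℕ} (hn : ∀ i ≤ n, par^[i] z ≠ root) :
    ‖∑ i ∈ range n, Δ (par (par^[i] z)) • P (par^[i] z)‖ ≤ Δ (par^[n + 1] z) / (k - 1) := by
  have hterm (i : ℕ) (hi : i < n) :
      ‖Δ (par (par^[i] z)) • P (par^[i] z)‖ ≤ Δ (par^[i + 1] z) := by
    rw [norm_smul, Real.norm_of_nonneg (hΔnonneg _), ← Function.iterate_succ_apply' par i z]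
    exact mul_le_of_le_one_right (hΔnonneg _)
      (hP _ (parent_ne_self_of_ne_root hroot hreach (hn i hi.le)))
  have hgrow (i : ℕ) (hi : i < n) : k * Δ (par^[i + 1] z) ≤ Δ (par^[i + 1 + 1] z) := by
    rw [Function.iterate_succ_apply' par (i + 1) z, ← le_div_iff₀' (by linarith)]
    exact hΔdecay _ (hn (i + 1) hi)
  calc ‖∑ i ∈ range n, Δ (par (par^[i] z)) • P (par^[i] z)‖
      ≤ ∑ i ∈ range n, Δ (par^[i + 1] z) :=
        (norm_sum_le _ _).trans (sum_le_sum fun i hi => hterm i (mem_range.1 hi))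
    _ ≤ Δ (par^[n + 1] z) / (k - 1) :=
        sum_range_le_div_sub_one (a := fun i => Δ (par^[i + 1] z)) hk (hΔnonneg _) hgrow

theorem exists_child_norm_sub_sub_le (hroot : par root = root)
    (hreach : ∀ w, ∃ m, par^[m] w = root) (hk : 1 < k) (hΔnonneg : ∀ w, 0 ≤ Δ w)
    (hΔdecay : ∀ w, w ≠ root → Δ w ≤ Δ (par w) / k) (hP : ∀ u, par u ≠ u → ‖P u‖ ≤ 1)
    (hF : ∀ z, z ≠ root → F z = F (par z) + Δ (par z) • P z) {w z : T}
    (hwz : IsAnc par w z) (hzw : z ≠ w) :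
    ∃ a, par a = w ∧ a ≠ w ∧ IsAnc par a z ∧ ‖F z - F w - Δ w • P a‖ ≤ Δ w / (k - 1) := by
  classical
  have hp : par^[Nat.find hwz] z = w := Nat.find_spec hwz
  obtain ⟨n, hn⟩ : ∃ n, Nat.find hwz = n + 1 :=
    Nat.exists_eq_succ_of_ne_zero fun h0 => hzw (by rwa [h0] at hp)
  rw [hn] at hp
  have hbelow (i : ℕ) (hi : i ≤ n) : par^[i] z ≠ w := Nat.find_min hwz (by omega)
  have hne_root (i : ℕ) (hi : i ≤ n) : par^[i] z ≠ root := fun h => hbelow i hi <| by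
    rw [h, ← hp, ← Nat.sub_add_cancel (show i ≤ n + 1 by omega), Function.iterate_add_apply, h,
      Function.iterate_fixed hroot]
  have hparent : par (par^[n] z) = w := (Function.iterate_succ_apply' par n z).symm.trans hp
  refine ⟨par^[n] z, hparent, hbelow n le_rfl, ⟨n, rfl⟩, ?_⟩
  have hdecomp := eq_iterate_add_sum hF (fun i (hi : i < n + 1) => hne_root i (by omega))
  rw [sum_range_succ, hp, hparent] at hdecomp
  rw [hdecomp, ← hp]
  convert norm_sum_smul_le_div_sub_one hroot hreach hk hΔnonneg hΔdecay hP hne_root using 2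
  abel

theorem norm_sub_bounds_of_isLCA (hroot : par root = root)
    (hreach : ∀ w, ∃ m, par^[m] w = root) (hk : 1 < k) (hΔnonneg : ∀ w, 0 ≤ Δ w)
    (hΔzero : ∀ w, Δ w = 0 ↔ IsLeaf par w) (hΔdecay : ∀ w, w ≠ root → Δ w ≤ Δ (par w) / k)
    (hP : ∀ u, par u ≠ u → ‖P u‖ ≤ 1)
    (hP_sep : ∀ u u', par u ≠ u → par u' ≠ u' → par u = par u' → u ≠ u' →
      1 / 2 ≤ ‖P u - P u'‖)
    (hF : ∀ z, z ≠ root → F z = F (par z) + Δ (par z) • P z) {x y w : T}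
    (hx : IsLeaf par x) (hy : IsLeaf par y) (hxy : x ≠ y) (hw : IsLCA par w x y) :
    0 < Δ w ∧ Δ w / 2 - 2 * (Δ w / (k - 1)) ≤ ‖F x - F y‖ ∧
      ‖F x - F y‖ ≤ 2 * Δ w + 2 * (Δ w / (k - 1)) := by
  obtain ⟨hwx, hwy, hlca⟩ := hw
  have hxw : x ≠ w := by rintro rfl; exact hxy (eq_of_isAnc_of_isLeaf hx hwy).symm
  have hyw : y ≠ w := by rintro rfl; exact hxy (eq_of_isAnc_of_isLeaf hy hwx)
  obtain ⟨a, hpa, haw, hax, hRx⟩ :=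
    exists_child_norm_sub_sub_le hroot hreach hk hΔnonneg hΔdecay hP hF hwx hxw
  obtain ⟨b, hpb, hbw, hby, hRy⟩ :=
    exists_child_norm_sub_sub_le hroot hreach hk hΔnonneg hΔdecay hP hF hwy hyw
  have hΔw : 0 < Δ w := (hΔnonneg w).lt_of_ne fun h => ((hΔzero w).1 h.symm) a haw hpa
  have hab : a ≠ b := by
    rintro rfl
    obtain ⟨t, ht⟩ := hlca a hax hby
    have hcycle : par^[t + 1] a = a := by rw [Function.iterate_succ_apply, hpa, ht]
    have ha : a = root := eq_root_of_iterate_eq_self hroot hreach t.succ_ne_zero hcycle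
    exact haw (by rw [← hpa, ha, hroot])
  have hsep := hP_sep a b (hpa ▸ haw.symm) (hpb ▸ hbw.symm) (hpa.trans hpb.symm) hab
  have hPab : ‖P a - P b‖ ≤ 2 := (norm_sub_le _ _).trans (by
    linarith [hP a (hpa ▸ haw.symm), hP b (hpb ▸ hbw.symm)])
  set Rx := F x - F w - Δ w • P a
  set Ry := F y - F w - Δ w • P b
  have hR : ‖Rx - Ry‖ ≤ 2 * (Δ w / (k - 1)) := (norm_sub_le _ _).trans (by linarith)
  have hdiff : F x - F y = Δ w • (P a - P b) + (Rx - Ry) := by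
    simp only [Rx, Ry, smul_sub]; abel
  have hmain : ‖Δ w • (P a - P b)‖ = Δ w * ‖P a - P b‖ := by
    rw [norm_smul, Real.norm_of_nonneg hΔw.le]
  refine ⟨hΔw, ?_, ?_⟩
  · calc Δ w / 2 - 2 * (Δ w / (k - 1)) ≤ ‖Δ w • (P a - P b)‖ - ‖Rx - Ry‖ := by
          rw [hmain]; nlinarith
      _ ≤ ‖F x - F y‖ := hdiff ▸ norm_sub_le_norm_add _ _
  · calc ‖F x - F y‖ ≤ ‖Δ w • (P a - P b)‖ + ‖Rx - Ry‖ := hdiff ▸ norm_add_le _ _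
      _ ≤ 2 * Δ w + 2 * (Δ w / (k - 1)) := by rw [hmain]; nlinarith

theorem embedsM_of_separated_labels (hk : 5 < k) (hroot : par root = root)
    (hreach : ∀ w, ∃ m, par^[m] w = root) (hΔnonneg : ∀ w, 0 ≤ Δ w)
    (hΔzero : ∀ w, Δ w = 0 ↔ IsLeaf par w) (hΔdecay : ∀ w, w ≠ root → Δ w ≤ Δ (par w) / k)
    {d : {w : T // IsLeaf par w} → {w : T // IsLeaf par w} → ℝ} (hd_self : ∀ x, d x x = 0)
    (hd_lca : ∀ x y, x ≠ y → ∃ w, IsLCA par w x.1 y.1 ∧ d x y = Δ w)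
    (hP : ∀ u, par u ≠ u → ‖P u‖ ≤ 1)
    (hP_sep : ∀ u u', par u ≠ u → par u' ≠ u' → par u = par u' → u ≠ u' →
      1 / 2 ≤ ‖P u - P u'‖)
    (hF : ∀ z, z ≠ root → F z = F (par z) + Δ (par z) • P z) :
    embedsM (4 * k / (k - 5)) d (fun a b : X => ‖a - b‖) := by
  have hk1 : 1 < k := by linarith
  have hk1' : k - 1 ≠ 0 := by linarith
  have hk5 : k - 5 ≠ 0 := by linarith
  have hbounds {x y : {w : T // IsLeaf par w}} (hxy : x ≠ y) {w : T}
      (hw : IsLCA par w x.1 y.1) :=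
    norm_sub_bounds_of_isLCA hroot hreach hk1 hΔnonneg hΔzero hΔdecay hP hP_sep hF x.2 y.2
      (Subtype.coe_ne_coe.2 hxy) hw
  have hlower (δ : ℝ) : (k - 5) / (2 * (k - 1)) * δ = δ / 2 - 2 * (δ / (k - 1)) := by
    field_simp; ring
  have hupper (δ : ℝ) :
      4 * k / (k - 5) * ((k - 5) / (2 * (k - 1)) * δ) = 2 * δ + 2 * (δ / (k - 1)) := by
    field_simp; ring
  refine ⟨fun x => F x.1, fun x y hxy => ?_, (k - 5) / (2 * (k - 1)),
    div_pos (by linarith) (by linarith), fun x y => ?_⟩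
  · by_contra hne
    obtain ⟨w, hw, -⟩ := hd_lca x y hne
    obtain ⟨hΔw, hlow, -⟩ := hbounds hne hw
    rw [← hlower, show F x.1 - F y.1 = 0 from sub_eq_zero.2 hxy, norm_zero] at hlow
    exact (mul_pos (div_pos (by linarith) (by linarith)) hΔw).not_ge hlow
  · by_cases hxy : x = y
    · simp [hxy, hd_self]
    obtain ⟨w, hw, hdw⟩ := hd_lca x y hxy
    obtain ⟨-, hlow, hup⟩ := hbounds hxy hw
    rw [hdw, hupper, hlower]
    exact ⟨hlow, hup⟩

end HST

universe u v

theorem statement6_general (k : ℝ) (hk : 17 < k)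
    (T : Type v) [Fintype T] (root : T) (par : T → T) (Δ : T → ℝ)
    (hroot : par root = root)
    (hreach : ∀ w : T, ∃ m : ℕ, par^[m] w = root)
    (hΔnonneg : ∀ w : T, 0 ≤ Δ w)
    (hΔzero : ∀ w : T, Δ w = 0 ↔ IsLeaf par w)
    (hΔdecay : ∀ w : T, w ≠ root → Δ w ≤ Δ (par w) / k)
    (d : { w : T // IsLeaf par w } → { w : T // IsLeaf par w } → ℝ)
    (hd_self : ∀ x, d x x = 0)
    (hd_lca : ∀ x y, x ≠ y → ∃ w : T, IsLCA par w x.1 y.1 ∧ d x y = Δ w)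
    (X : Type u) [NormedAddCommGroup X] [NormedSpace ℝ X]
    (hdim : (⌈Real.logb 2 ((maxOutDegree par : ℝ))⌉₊ : Cardinal) ≤ Module.rank ℝ X) :
    embedsM (16 * k / (k - 17)) d (fun a b : X => ‖a - b‖) := by
  obtain ⟨P, hP, hP_sep⟩ := exists_separated_labels (X := X) par hdim
  obtain ⟨F, hF⟩ := exists_eq_parent_add hreach fun z => Δ (par z) • P z
  have hembed := embedsM_of_separated_labels (by linarith) hroot hreach hΔnonneg hΔzero hΔdecay
    hd_self hd_lca hP hP_sep hF
  refine hembed.mono (div_pos (by linarith) (by linarith)) ?_ fun _ _ => norm_nonneg _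
  rw [div_le_div_iff₀ (by linarith) (by linarith)]
  nlinarith

/-- Every finite `k`-HST with `k > 17` admits an embedding with distortion
at most `16k/(k-17)` into every real Banach space `X` with `dim X ≥ log₂ D`, where `D` is
the maximal out-degree of a vertex of the rooted tree defining the `k`-HST.  The `k`-HST is
given by a finite rooted tree `(T, root, par)` with labels `Δ`, and its points are the
leaves of `T`, with `d x y = Δ (lca x y)` for distinct leaves `x, y`. -/
theorem statement6 (k : ℝ) (hk : 17 < k)
    (T : Type v) [Fintype T] (root : T) (par : T → T) (Δ : T → ℝ)
    (hroot : par root = root)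
    (hreach : ∀ w : T, ∃ m : ℕ, par^[m] w = root)
    (hΔnonneg : ∀ w : T, 0 ≤ Δ w)
    (hΔzero : ∀ w : T, Δ w = 0 ↔ IsLeaf par w)
    (hΔdecay : ∀ w : T, w ≠ root → Δ w ≤ Δ (par w) / k)
    (d : { w : T // IsLeaf par w } → { w : T // IsLeaf par w } → ℝ)
    (hd_self : ∀ x, d x x = 0)
    (hd_lca : ∀ x y, x ≠ y → ∃ w : T, IsLCA par w x.1 y.1 ∧ d x y = Δ w)
    (X : Type u) [NormedAddCommGroup X] [NormedSpace ℝ X] [CompleteSpace X]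
    (hdim : (⌈Real.logb 2 ((maxOutDegree par : ℝ))⌉₊ : Cardinal) ≤ Module.rank ℝ X) :
    embedsM (16 * k / (k - 17)) d (fun a b : X => ‖a - b‖) :=
  statement6_general k hk T root par Δ hroot hreach hΔnonneg hΔzero hΔdecay d hd_self hd_lca X hdim

end Stmt
end
end

section
/- There exists a universal constant K ≥ 1 such that every finite ultrametric space with n points admits a K-embedding into every real Banach space X with dim X ≥ log₂ n. -/
/-!
A finite ultrametric space is a tree of nested clusters: for each scale `r` the closed balls of
radius `r` partition it. Pick `n` points `s z` of norm `≤ 2` that are `1`-separated; a volume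
(packing) argument provides them in any normed space of dimension `≥ log₂ n`. Send `z` to
`∑ⱼ 16 ^ j • s (c_j z)`, where `c_j z` is a chosen point of the ball of radius `16 ^ j` around `z`.
If `16 ^ k < d(x, y) ≤ 16 ^ (k + 1)`, the terms with `j > k` cancel in `f x - f y`, the term
`j = k` has norm between `16 ^ k` and `4 ⬝ 16 ^ k`, and the lower terms add up to at most
`4 ⬝ 16 ^ k / 15`, so `‖f x - f y‖` is comparable to `d(x, y)` with a constant independent of `n`.
-/

noncomputable section

namespace Stmt

universe u v

open Metric MeasureTheory Module

lemma pow_finrank_le_card_mul_of_subset_biUnion_closedBall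
    {X : Type*} [NormedAddCommGroup X] [NormedSpace ℝ X] [FiniteDimensional ℝ X]
    {r ε : ℝ} (hr : 0 ≤ r) (hε : 0 ≤ ε) {C : Finset X}
    (hC : closedBall (0 : X) r ⊆ ⋃ y ∈ C, closedBall y ε) :
    r ^ finrank ℝ X ≤ C.card * ε ^ finrank ℝ X := by
  let : MeasurableSpace X := borel X
  have : BorelSpace X := ⟨rfl⟩
  set μ : Measure X := Measure.addHaar
  have hvol : ∀ {ρ : ℝ} (x : X), 0 ≤ ρ →
      μ (closedBall x ρ) = ENNReal.ofReal (ρ ^ finrank ℝ X) * μ (closedBall 0 1) :=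
    fun x hρ => Measure.addHaar_closedBall' μ x hρ
  have hcover : μ (closedBall 0 r) ≤ C.card * μ (closedBall 0 ε) :=
    calc μ (closedBall 0 r) ≤ ∑ y ∈ C, μ (closedBall y ε) :=
          (measure_mono hC).trans (measure_biUnion_finset_le _ _)
      _ = C.card * μ (closedBall 0 ε) := by
          simp only [hvol _ hε, Finset.sum_const, nsmul_eq_mul]
  rw [hvol 0 hr, hvol 0 hε, ← mul_assoc, ENNReal.mul_le_mul_iff_left
    (measure_closedBall_pos μ 0 one_pos).ne' measure_closedBall_lt_top.ne,
    ← ENNReal.ofReal_natCast, ← ENNReal.ofReal_mul (by positivity)] at hcover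
  exact (ENNReal.ofReal_le_ofReal_iff (by positivity)).mp hcover

lemma exists_finset_subset_closedBall_two_pow_finrank_le_card
    {X : Type*} [NormedAddCommGroup X] [NormedSpace ℝ X] [FiniteDimensional ℝ X] :
    ∃ C : Finset X, ↑C ⊆ closedBall (0 : X) 2 ∧ (C : Set X).Pairwise (1 < ‖· - ·‖) ∧
      2 ^ finrank ℝ X ≤ C.card := by
  set A := closedBall (0 : X) 2
  obtain ⟨N, -, hNfin, hN⟩ := exists_finite_isCover_of_isCompact (ε := 2⁻¹) (by norm_num)
    (isCompact_closedBall (0 : X) 2)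
  have hpack : packingNumber 1 A ≠ ⊤ := by
    refine ne_top_of_le_ne_top (Set.encard_ne_top_iff.mpr hNfin) ?_
    calc packingNumber 1 A = packingNumber (2 * 2⁻¹) A := by norm_num
      _ ≤ externalCoveringNumber 2⁻¹ A := packingNumber_two_mul_le_externalCoveringNumber _ _
      _ ≤ N.encard := hN.externalCoveringNumber_le_encard
  have hfin : (maximalSeparatedSet 1 A).Finite := by
    rw [← Set.encard_ne_top_iff, encard_maximalSeparatedSet hpack]
    exact hpack
  refine ⟨hfin.toFinset, by simpa using maximalSeparatedSet_subset, ?_, ?_⟩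
  · intro x hx y hy hxy
    have := isSeparated_maximalSeparatedSet (ε := 1) (A := A)
      (by simpa using hx) (by simpa using hy) hxy
    simpa only [edist_dist, dist_eq_norm, ENNReal.coe_one, ENNReal.one_lt_ofReal] using this
  · have hcover := (isCover_maximalSeparatedSet hpack).subset_iUnion_closedBall
    have := pow_finrank_le_card_mul_of_subset_biUnion_closedBall (C := hfin.toFinset)
      (r := 2) (ε := 1) (by norm_num) (by norm_num) (by simpa using hcover)
    rw [one_pow, mul_one] at this
    exact_mod_cast this

lemma exists_norm_le_two_pairwise_one_lt_norm_sub
    {X : Type*} [NormedAddCommGroup X] [NormedSpace ℝ X] {k : ℕ}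
    (hk : (k : Cardinal) ≤ Module.rank ℝ X) (ι : Type*) [Fintype ι] (hι : Fintype.card ι ≤ 2 ^ k) :
    ∃ s : ι → X, (∀ i, ‖s i‖ ≤ 2) ∧ Pairwise fun i j => 1 < ‖s i - s j‖ := by
  obtain ⟨S, hS, hSind⟩ := le_rank_iff_exists_linearIndependent_finset.mp hk
  let V := Submodule.span ℝ (S : Set X)
  have hV : finrank ℝ V = k := hS ▸ finrank_span_finset_eq_card hSind
  obtain ⟨C, hC, hCsep, hCcard⟩ := exists_finset_subset_closedBall_two_pow_finrank_le_card (X := V)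
  obtain ⟨e⟩ : Nonempty (ι ↪ C) :=
    Function.Embedding.nonempty_of_card_le (by simpa using hι.trans (hV ▸ hCcard))
  refine ⟨fun i => (e i : V), fun i => ?_, fun i j hij => ?_⟩
  · simpa using hC (e i).2
  · exact hCsep (e i).2 (e j).2 (fun h => hij (e.injective (Subtype.ext h)))

lemma sum_zpow_le_of_forall_lt {q : ℝ} (hq : 1 < q) {F : Finset ℤ} {m : ℤ}
    (hF : ∀ j ∈ F, j < m) : ∑ j ∈ F, q ^ j ≤ q ^ m / (q - 1) := by
  have hq0 : 0 < q - 1 := sub_pos.mpr hq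
  induction F using Finset.induction_on_max generalizing m with
  | empty => simp only [Finset.sum_empty]; positivity
  | insert a F hlt ih =>
    have ha : a ∉ F := fun h => (hlt a h).false
    have hF' := ih (m := a) hlt
    have ham : q ^ (a + 1) ≤ q ^ m := zpow_le_zpow_right₀ hq.le (hF a (by simp))
    rw [Finset.sum_insert ha, le_div_iff₀ hq0]
    rw [le_div_iff₀ hq0] at hF'
    rw [zpow_add_one₀ (by positivity)] at ham
    nlinarith

lemma norm_sum_zpow_smul_le {X : Type*} [NormedAddCommGroup X] [NormedSpace ℝ X]
    {q : ℝ} (hq : 1 < q) {F : Finset ℤ} {m : ℤ} (hF : ∀ j ∈ F, j < m) {v : ℤ → X} {C : ℝ}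
    (hv : ∀ j, ‖v j‖ ≤ C) : ‖∑ j ∈ F, q ^ j • v j‖ ≤ C * q ^ m / (q - 1) := by
  have hC : 0 ≤ C := (norm_nonneg _).trans (hv 0)
  calc ‖∑ j ∈ F, q ^ j • v j‖ ≤ ∑ j ∈ F, q ^ j * C := by
        refine (norm_sum_le _ _).trans (Finset.sum_le_sum fun j hj => ?_)
        rw [norm_smul, Real.norm_of_nonneg (by positivity)]
        exact mul_le_mul_of_nonneg_left (hv j) (by positivity)
    _ = C * ∑ j ∈ F, q ^ j := by rw [Finset.mul_sum]; simp only [mul_comm]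
    _ ≤ C * (q ^ m / (q - 1)) := mul_le_mul_of_nonneg_left (sum_zpow_le_of_forall_lt hq hF) hC
    _ = C * q ^ m / (q - 1) := (mul_div_assoc _ _ _).symm

lemma norm_sum_zpow_smul_mem_Icc {X : Type*} [NormedAddCommGroup X] [NormedSpace ℝ X]
    {q : ℝ} (hq : 1 < q) {E : Finset ℤ} {k : ℤ} (hk : k ∈ E) {v : ℤ → X} {c C : ℝ}
    (hv : ∀ j, ‖v j‖ ≤ C) (hvk : c ≤ ‖v k‖) (hvanish : ∀ j ∈ E, k < j → v j = 0) :
    ‖∑ j ∈ E, q ^ j • v j‖ ∈ Set.Icc ((c - C / (q - 1)) * q ^ k) (C * q / (q - 1) * q ^ k) := by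
  have hq0 : 0 < q - 1 := sub_pos.mpr hq
  have hqk : 0 < q ^ k := zpow_pos (by linarith) k
  set tail := ∑ j ∈ (E.erase k).filter (· < k), q ^ j • v j
  have hsplit : ∑ j ∈ E, q ^ j • v j = q ^ k • v k + tail := by
    rw [← Finset.add_sum_erase E _ hk]
    refine congrArg _ (Finset.sum_filter_of_ne fun j hj hne => ?_).symm
    refine lt_of_le_of_ne (not_lt.mp fun hkj => hne ?_) (Finset.ne_of_mem_erase hj)
    rw [hvanish j (Finset.mem_of_mem_erase hj) hkj, smul_zero]
  have htail : ‖tail‖ ≤ C * q ^ k / (q - 1) :=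
    norm_sum_zpow_smul_le hq (fun j hj => (Finset.mem_filter.mp hj).2) hv
  have hlead : ‖q ^ k • v k‖ = q ^ k * ‖v k‖ := by
    rw [norm_smul, Real.norm_of_nonneg hqk.le]
  have hlo := norm_sub_le (q ^ k • v k + tail) tail
  rw [add_sub_cancel_right] at hlo
  have hhi := norm_add_le (q ^ k • v k) tail
  have hc : c * q ^ k ≤ q ^ k * ‖v k‖ := by nlinarith
  have hC : q ^ k * ‖v k‖ ≤ C * q ^ k := by nlinarith [hv k]
  have hsplitC : C * q / (q - 1) * q ^ k = C * q ^ k + C * q ^ k / (q - 1) := by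
    field_simp; ring
  rw [hsplit, Set.mem_Icc, sub_mul, div_mul_eq_mul_div, hsplitC]
  constructor <;> linarith

section Ultrametric

variable {M : Type*} [PseudoMetricSpace M]

/-- Depends on `x` only through `closedBall x r`, so in an ultrametric space two points have the
same representative exactly when they lie in a common ball of radius `r`. -/
def ballRep (r : ℝ) (x : M) : M :=
  @Classical.epsilon M ⟨x⟩ (· ∈ closedBall x r)

lemma ballRep_mem_closedBall {r : ℝ} (hr : 0 ≤ r) (x : M) : ballRep r x ∈ closedBall x r :=
  Classical.epsilon_spec ⟨x, mem_closedBall_self hr⟩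

variable [IsUltrametricDist M]

lemma ballRep_eq_ballRep_iff {r : ℝ} (hr : 0 ≤ r) {x y : M} :
    ballRep r x = ballRep r y ↔ dist x y ≤ r := by
  refine ⟨fun h => ?_, fun h => ?_⟩
  · have hx := ballRep_mem_closedBall hr x
    have hy := ballRep_mem_closedBall hr y
    rw [h, mem_closedBall'] at hx
    rw [mem_closedBall] at hy
    exact (IsUltrametricDist.dist_triangle_max x (ballRep r y) y).trans (max_le hx hy)
  · unfold ballRep
    rw [IsUltrametricDist.closedBall_eq_of_mem (mem_closedBall'.mpr h)]

variable {X : Type*} [NormedAddCommGroup X] [NormedSpace ℝ X]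

def lacunaryEmbedding (q : ℝ) (E : Finset ℤ) (s : M → X) (z : M) : X :=
  ∑ j ∈ E, q ^ j • s (ballRep (q ^ j) z)

lemma norm_lacunaryEmbedding_sub_mem_Icc {q : ℝ} (hq : 1 < q) {E : Finset ℤ} {s : M → X}
    {R δ : ℝ} (hs : ∀ z, ‖s z‖ ≤ R) (hsep : Pairwise fun a b => δ ≤ ‖s a - s b‖)
    {x y : M} {k : ℤ} (hk : k ∈ E) (hlo : q ^ k < dist x y) (hhi : dist x y ≤ q ^ (k + 1)) :
    ‖lacunaryEmbedding q E s x - lacunaryEmbedding q E s y‖ ∈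
      Set.Icc ((δ - 2 * R / (q - 1)) * q ^ k) (2 * R * q / (q - 1) * q ^ k) := by
  have hpos : ∀ j : ℤ, 0 ≤ q ^ j := fun j => zpow_nonneg (by linarith) j
  rw [lacunaryEmbedding, lacunaryEmbedding, ← Finset.sum_sub_distrib]
  simp_rw [← smul_sub]
  refine norm_sum_zpow_smul_mem_Icc hq hk (fun j => ?_) (hsep ?_) fun j _ hkj => ?_
  · exact (norm_sub_le _ _).trans (by linarith [hs (ballRep (q ^ j) x), hs (ballRep (q ^ j) y)])
  · exact fun h => hlo.not_ge ((ballRep_eq_ballRep_iff (hpos k)).mp h)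
  · rw [(ballRep_eq_ballRep_iff (hpos j)).mpr (hhi.trans (zpow_le_zpow_right₀ hq.le hkj)),
      sub_self]

end Ultrametric

lemma embedsM_of_forall_ne {V Y : Type*} [MetricSpace V] [NormedAddCommGroup Y] {K r : ℝ}
    (hr : 0 < r) (f : V → Y)
    (hf : ∀ a b, a ≠ b → r * dist a b ≤ ‖f a - f b‖ ∧ ‖f a - f b‖ ≤ K * (r * dist a b)) :
    embedsM K (fun a b : V => dist a b) (fun a b : Y => ‖a - b‖) := by
  refine ⟨f, fun a b hab => ?_, r, hr, fun a b => ?_⟩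
  · by_contra hne
    have := (hf a b hne).1
    rw [hab, sub_self, norm_zero] at this
    exact (mul_pos hr (dist_pos.mpr hne)).not_ge this
  · rcases eq_or_ne a b with rfl | hne
    · simp
    · exact hf a b hne

lemma le_two_pow_natCeil_logb (n : ℕ) : n ≤ 2 ^ ⌈Real.logb 2 n⌉₊ := by
  have := Real.natCeil_logb_natCast 2 n
  rw [Nat.cast_ofNat] at this
  exact this ▸ Nat.le_pow_clog one_lt_two n

/-- There is a universal constant `K ≥ 1` such that every finite ultrametric
space with `n` points admits a `K`-embedding into every real Banach space `X` with
`dim X ≥ log₂ n`. -/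
theorem statement7 :
    ∃ K : ℝ, 1 ≤ K ∧
      ∀ (M : Type v) [MetricSpace M] [Fintype M],
        (∀ x y z : M, dist x z ≤ max (dist x y) (dist y z)) →
        ∀ (X : Type u) [NormedAddCommGroup X] [NormedSpace ℝ X] [CompleteSpace X],
          (⌈Real.logb 2 ((Fintype.card M : ℝ))⌉₊ : Cardinal) ≤ Module.rank ℝ X →
          embedsM K (fun a b : M => dist a b) (fun a b : X => ‖a - b‖) := by
  -- `1024 / 11 = (64 / 15) / (11 / 240)`, the ratio of the bounds below at `q = 16`, `R = 2`
  refine ⟨1024 / 11, by norm_num, fun M _ _ hU X _ _ _ hrank => ?_⟩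
  have : IsUltrametricDist M := ⟨hU⟩
  obtain ⟨s, hs, hsep⟩ :=
    exists_norm_le_two_pairwise_one_lt_norm_sub hrank M (le_two_pow_natCeil_logb _)
  let scale : M → M → ℤ := fun x y => Int.clog 16 (dist x y) - 1
  let E := Finset.univ.image fun p : M × M => scale p.1 p.2
  refine embedsM_of_forall_ne (r := 11 / 240) (by norm_num) (lacunaryEmbedding 16 E s)
    fun x y hxy => ?_
  have hd := dist_pos.mpr hxy
  have hlo : (16 : ℝ) ^ scale x y < dist x y := by
    simpa using Int.zpow_pred_clog_lt_self (b := 16) (by norm_num) hd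
  have hhi : dist x y ≤ 16 ^ (scale x y + 1) := by
    simpa [scale] using Int.self_le_zpow_clog (b := 16) (by norm_num) (dist x y)
  have hk : scale x y ∈ E := Finset.mem_image_of_mem _ (Finset.mem_univ (x, y))
  obtain ⟨h1, h2⟩ := norm_lacunaryEmbedding_sub_mem_Icc (q := 16) (by norm_num) hs
    (fun a b h => (hsep h).le) hk hlo hhi
  rw [zpow_add_one₀ (by norm_num)] at hhi
  norm_num at h1 h2
  constructor <;> linarith

end Stmt
end
end

section
/- Let ε ∈ (0,1/2) and let α ∈ (0,1) be defined by (1/2)^α = 1/2 + ε. Then for every k ∈ ℕ and all vertices x, y of D_k: (d_{D_k}(x,y))^α ≤ d_{W_k}(x,y) ≤ (8/(1−4ε²))·(d_{D_k}(x,y))^α; in particular the identity bijections from the weighted diamonds W_k onto the α-snowflaked versions of the diamonds (D_k, d_{D_k}) have uniformly bounded distortions for all k. -/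
noncomputable section

open scoped ENNReal Classical

namespace Stmt

/-- Vertex set together with the (oriented) edge relation of the diamond graph `D n`. -/
def VE : ℕ → (V : Type) × (V → V → Prop)
  | 0 => ⟨Fin 2, fun u v => u = 0 ∧ v = 1⟩
  | n + 1 =>
      ⟨(VE n).1 ⊕ ({e : (VE n).1 × (VE n).1 // (VE n).2 e.1 e.2} × Bool),
        fun u v =>
          ∃ (e : {e : (VE n).1 × (VE n).1 // (VE n).2 e.1 e.2}) (b : Bool),
            (u = Sum.inl e.1.1 ∧ v = Sum.inr (e, b)) ∨
            (u = Sum.inr (e, b) ∧ v = Sum.inl e.1.2)⟩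

/-- Vertices of the diamond graph `D n` (equivalently, of the weighted diamond `W n`). -/
def Vert (n : ℕ) : Type := (VE n).1

/-- The (oriented) edge relation of the diamond graph `D n`. -/
def dEdge (n : ℕ) : Vert n → Vert n → Prop := (VE n).2

/-- The edges of generation `k` inside the vertex set of `D n`: the edges of `D k`,
transported to `Vert n` via the canonical inclusions.  These are the edges of the
weighted diamond `W n`, which get weight `(1/2 + ε) ^ k`. -/
def edgeAt : (n : ℕ) → (k : ℕ) → Vert n → Vert n → Prop
  | 0, k => fun u v => k = 0 ∧ dEdge 0 u v
  | n + 1, k => fun u v =>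
      (k = n + 1 ∧ dEdge (n + 1) u v) ∨
      (∃ u' v' : Vert n, u = Sum.inl u' ∧ v = Sum.inl v' ∧ edgeAt n k u' v')

/-- Edge weights of the weighted diamond `W n`:  the value is `(1/2 + ε) ^ k` if `{u, v}`
is an edge of generation `k`, and `∞` if `{u, v}` is not an edge of `W n`. -/
def wCost (ε : ℝ) (n : ℕ) (u v : Vert n) : ℝ≥0∞ :=
  ⨅ (k : ℕ) (_ : edgeAt n k u v ∨ edgeAt n k v u), ENNReal.ofReal ((1 / 2 + ε) ^ k)

/-- Total weight of a walk, recorded as the list of visited vertices. -/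
def walkCost {V : Type*} (c : V → V → ℝ≥0∞) : List V → ℝ≥0∞
  | [] => 0
  | [_] => 0
  | u :: v :: l => c u v + walkCost c (v :: l)

/-- The shortest-path (extended) distance associated to an edge-weight function `c`. -/
def spDist {V : Type*} (c : V → V → ℝ≥0∞) (u v : V) : ℝ≥0∞ :=
  ⨅ p : { l : List V // l.head? = some u ∧ l.getLast? = some v }, walkCost c p.1

/-- The shortest-path metric `d_{W_n}` of the weighted diamond `W n` (with parameter `ε`). -/
def dW (ε : ℝ) (n : ℕ) (u v : Vert n) : ℝ :=
  (spDist (wCost ε n) u v).toReal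

/-- The standard shortest-path metric `d_{D_k}` of the diamond `D k`, in which every edge of
`D k` has length `(1/2)^k`. -/
def dD (k : ℕ) (u v : Vert k) : ℝ :=
  (spDist
    (fun a b => ⨅ (_ : dEdge k a b ∨ dEdge k b a), ENNReal.ofReal ((1 / 2 : ℝ) ^ k))
    u v).toReal

/-!
Lower bound: for `α ≤ 1` the power `edistD ^ α` is again a distance, and an edge of generation
`j` of `W` joins vertices at `D`-distance at most `(1/2)^j`, i.e. at `edistD ^ α`-distance at most
its weight `(1/2 + ε)^j`; hence `edistD ^ α` lies below the shortest-path distance of `W`.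

Upper bound: subdivision embeds `D m` isometrically into `D (m + j)`. If `x, y` are at
`D`-distance `d` with `(1/2)^(m+1) < d ≤ (1/2)^m`, retract both onto `D m`; this moves each of
them by a geometric series, at most `(1/2)^m` in `D` and `(1/2 + ε)^(m+1) / (1/2 - ε)` in `W`.
The retracted points are then at most two edges of `D m` apart, so at `W`-distance at most
`2 (1/2 + ε)^m`, and the total `2 (1/2 + ε)^m / (1/2 - ε) = 8/(1 - 4ε²) (1/2 + ε)^(m+1)` is at most
`8/(1 - 4ε²) d^α`.
-/

section ShortestPath

variable {V : Type*} (c : V → V → ℝ≥0∞)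

lemma spDist_le_walkCost {l : List V} {u v : V} (hu : l.head? = some u)
    (hv : l.getLast? = some v) : spDist c u v ≤ walkCost c l :=
  iInf_le (fun p : { l : List V // l.head? = some u ∧ l.getLast? = some v } => walkCost c p.1)
    ⟨l, hu, hv⟩

lemma spDist_self (u : V) : spDist c u u = 0 :=
  nonpos_iff_eq_zero.1 (spDist_le_walkCost c (l := [u]) rfl rfl)

lemma spDist_le_cost (u v : V) : spDist c u v ≤ c u v := by
  simpa [walkCost] using spDist_le_walkCost c (l := [u, v]) rfl rfl

lemma le_spDist {φ : V → V → ℝ≥0∞} (hself : ∀ a, φ a a = 0)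
    (htri : ∀ a b d, φ a d ≤ φ a b + φ b d) (hle : ∀ a b, φ a b ≤ c a b) (u v : V) :
    φ u v ≤ spDist c u v := by
  suffices h : ∀ (l : List V) (u : V), l.head? = some u → l.getLast? = some v →
      φ u v ≤ walkCost c l from le_iInf fun p => h p.1 u p.2.1 p.2.2
  intro l
  induction l with
  | nil => simp
  | cons a t ih =>
    rintro u ⟨⟩ hv
    cases t with
    | nil => cases hv; simp [walkCost, hself]
    | cons b t =>
      calc φ a v ≤ φ a b + φ b v := htri _ _ _
        _ ≤ c a b + walkCost c (b :: t) :=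
          add_le_add (hle a b) (ih b rfl (by rwa [List.getLast?_cons_cons] at hv))

lemma walkCost_append_cons (l₁ l₂ : List V) (v : V) :
    walkCost c (l₁ ++ v :: l₂) = walkCost c (l₁ ++ [v]) + walkCost c (v :: l₂) := by
  induction l₁ with
  | nil => simp [walkCost]
  | cons a t ih =>
    cases t with
    | nil => simp [walkCost]
    | cons b t =>
      change c a b + walkCost c (b :: t ++ v :: l₂) = c a b + walkCost c (b :: t ++ [v]) + _
      rw [ih, add_assoc]

lemma spDist_triangle (u v w : V) : spDist c u w ≤ spDist c u v + spDist c v w := by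
  refine ENNReal.le_iInf_add_iInf fun ⟨l₁, hu, hv⟩ ⟨l₂, hv', hw⟩ => ?_
  obtain ⟨t, rfl⟩ : ∃ t, l₂ = v :: t := by
    cases l₂ with
    | nil => cases hv'
    | cons x t => cases hv'; exact ⟨t, rfl⟩
  obtain ⟨s, rfl⟩ : ∃ s, l₁ = s ++ [v] :=
    ⟨l₁.dropLast, (List.dropLast_append_getLast? v hv).symm⟩
  have hcost : walkCost c (s ++ v :: t) = walkCost c (s ++ [v]) + walkCost c (v :: t) :=
    walkCost_append_cons c s t v
  refine hcost ▸ spDist_le_walkCost c ?_ ?_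
  · cases s <;> simpa using hu
  · cases t with
    | nil => simpa using hw
    | cons y t => rwa [List.getLast?_append_of_ne_nil _ (List.cons_ne_nil _ _),
        ← List.getLast?_cons_cons (a := v)]

lemma spDist_comm (hc : ∀ a b, c a b = c b a) (u v : V) : spDist c u v = spDist c v u := by
  have key : ∀ x y : V, spDist c y x ≤ spDist c x y := fun x y =>
    le_spDist c (φ := fun a b => spDist c b a) (spDist_self c)
      (fun a b d => (spDist_triangle c d b a).trans_eq (add_comm _ _))
      (fun a b => (spDist_le_cost c b a).trans_eq (hc b a)) x y
  exact le_antisymm (key v u) (key u v)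

lemma spDist_le_add_add (hc : ∀ a b, c a b = c b a) (x y a b : V) :
    spDist c x y ≤ spDist c x a + spDist c a b + spDist c y b := by
  calc spDist c x y ≤ spDist c x a + spDist c a b + spDist c b y :=
        (spDist_triangle c x b y).trans (by gcongr; exact spDist_triangle c x a b)
    _ = _ := by rw [spDist_comm c hc b y]

lemma spDist_le_mul_spDist {c' : V → V → ℝ≥0∞} {t : ℝ≥0∞} (ht₀ : t ≠ 0) (ht : t ≠ ⊤)
    (h : ∀ a b, c' a b ≤ t * c a b) (u v : V) :
    spDist c' u v ≤ t * spDist c u v := by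
  have key : t⁻¹ * spDist c' u v ≤ spDist c u v := by
    refine le_spDist c (φ := fun a b => t⁻¹ * spDist c' a b) (fun a => by simp [spDist_self])
      (fun a b d => by rw [← mul_add]; gcongr; exact spDist_triangle c' a b d)
      (fun a b => ?_) u v
    calc t⁻¹ * spDist c' a b ≤ t⁻¹ * (t * c a b) := by
          gcongr; exact (spDist_le_cost c' a b).trans (h a b)
      _ = c a b := by rw [← mul_assoc, ENNReal.inv_mul_cancel ht₀ ht, one_mul]
  calc spDist c' u v = t * (t⁻¹ * spDist c' u v) := by
        rw [← mul_assoc, ENNReal.mul_inv_cancel ht₀ ht, one_mul]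
    _ ≤ t * spDist c u v := by gcongr

lemma le_spDist_of_ne {w : ℝ≥0∞} (hc : ∀ a b, w ≤ c a b) {u v : V} (huv : u ≠ v) :
    w ≤ spDist c u v := by
  refine le_iInf fun ⟨l, hu, hv⟩ => ?_
  match l, hu, hv with
  | [a], hu, hv => cases hu; cases hv; exact absurd rfl huv
  | a :: b :: t, _, _ => exact (hc a b).trans le_self_add

lemma walkCost_eq_nsmul_or_eq_top {w : ℝ≥0∞} (hc : ∀ a b, c a b = w ∨ c a b = ⊤) (l : List V) :
    (∃ N : ℕ, walkCost c l = N * w) ∨ walkCost c l = ⊤ := by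
  induction l with
  | nil => exact Or.inl ⟨0, by simp [walkCost]⟩
  | cons a t ih =>
    cases t with
    | nil => exact Or.inl ⟨0, by simp [walkCost]⟩
    | cons b t =>
      change (∃ N : ℕ, c a b + walkCost c (b :: t) = N * w) ∨ c a b + walkCost c (b :: t) = ⊤
      rcases hc a b with hab | hab
      · rcases ih with ⟨N, hN⟩ | htop
        · exact Or.inl ⟨N + 1, by rw [hab, hN]; push_cast; ring⟩
        · exact Or.inr (by rw [htop, add_top])
      · exact Or.inr (by rw [hab, top_add])

lemma spDist_le_of_lt_succ_mul {w : ℝ≥0∞} (hw₀ : w ≠ 0) (hw : w ≠ ⊤)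
    (hc : ∀ a b, c a b = w ∨ c a b = ⊤) {u v : V} {N : ℕ}
    (h : spDist c u v < (N + 1) * w) : spDist c u v ≤ N * w := by
  obtain ⟨⟨l, hu, hv⟩, hl⟩ := iInf_lt_iff.1 h
  rcases walkCost_eq_nsmul_or_eq_top c hc l with ⟨M, hM⟩ | htop
  · rw [hM, ENNReal.mul_lt_mul_iff_left hw₀ hw] at hl
    have hMN : M < N + 1 := by exact_mod_cast hl
    calc spDist c u v ≤ walkCost c l := spDist_le_walkCost c hu hv
      _ = M * w := hM
      _ ≤ N * w := by gcongr; exact_mod_cast Nat.lt_succ_iff.1 hMN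
  · simp [htop] at hl

end ShortestPath

def EdgeT (n : ℕ) : Type := {e : Vert n × Vert n // dEdge n e.1 e.2}

def up {n : ℕ} (u : Vert n) : Vert (n + 1) := Sum.inl u

def mid {n : ℕ} (e : EdgeT n) (b : Bool) : Vert (n + 1) := Sum.inr (e, b)

lemma Vert.succ_cases {n : ℕ} (x : Vert (n + 1)) :
    (∃ u, x = up u) ∨ ∃ e b, x = mid e b :=
  match x with
  | .inl u => Or.inl ⟨u, rfl⟩
  | .inr (e, b) => Or.inr ⟨e, b, rfl⟩

lemma up_injective {n : ℕ} : Function.Injective (up : Vert n → Vert (n + 1)) :=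
  Sum.inl_injective

lemma up_ne_mid {n : ℕ} (u : Vert n) (e : EdgeT n) (b : Bool) : up u ≠ mid e b :=
  Sum.inl_ne_inr

lemma dEdge_up_mid {n : ℕ} (e : EdgeT n) (b : Bool) : dEdge (n + 1) (up e.1.1) (mid e b) :=
  ⟨e, b, Or.inl ⟨rfl, rfl⟩⟩

lemma dEdge_mid_up {n : ℕ} (e : EdgeT n) (b : Bool) : dEdge (n + 1) (mid e b) (up e.1.2) :=
  ⟨e, b, Or.inr ⟨rfl, rfl⟩⟩

lemma dEdge_succ_cases {n : ℕ} {x y : Vert (n + 1)} (h : dEdge (n + 1) x y) :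
    ∃ e b, (x = up e.1.1 ∧ y = mid e b) ∨ (x = mid e b ∧ y = up e.1.2) :=
  h

lemma dEdge_zero_of_ne {u v : Vert 0} (h : u ≠ v) : dEdge 0 u v ∨ dEdge 0 v u :=
  (by decide : ∀ u v : Fin 2, u ≠ v → (u = 0 ∧ v = 1) ∨ (v = 0 ∧ u = 1)) u v h

lemma edgeAt_self : ∀ {n : ℕ} {u v : Vert n}, dEdge n u v → edgeAt n n u v
  | 0, _, _, h => ⟨rfl, h⟩
  | _ + 1, _, _, h => Or.inl ⟨rfl, h⟩

lemma edgeAt_up {n k : ℕ} {u v : Vert n} (h : edgeAt n k u v) :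
    edgeAt (n + 1) k (up u) (up v) :=
  Or.inr ⟨u, v, rfl, rfl, h⟩

def cD (n : ℕ) (a b : Vert n) : ℝ≥0∞ :=
  ⨅ (_ : dEdge n a b ∨ dEdge n b a), ENNReal.ofReal ((1 / 2 : ℝ) ^ n)

def edistD (n : ℕ) : Vert n → Vert n → ℝ≥0∞ := spDist (cD n)

def edistW (ε : ℝ) (n : ℕ) : Vert n → Vert n → ℝ≥0∞ := spDist (wCost ε n)

lemma dD_eq_toReal (n : ℕ) (u v : Vert n) : dD n u v = (edistD n u v).toReal := rfl

lemma dW_eq_toReal (ε : ℝ) (n : ℕ) (u v : Vert n) : dW ε n u v = (edistW ε n u v).toReal := rfl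

lemma cD_comm (n : ℕ) (a b : Vert n) : cD n a b = cD n b a := by
  rw [cD, cD, or_comm]

lemma cD_of_edge {n : ℕ} {a b : Vert n} (h : dEdge n a b ∨ dEdge n b a) :
    cD n a b = ENNReal.ofReal ((1 / 2 : ℝ) ^ n) :=
  iInf_pos h

lemma cD_of_not_edge {n : ℕ} {a b : Vert n} (h : ¬(dEdge n a b ∨ dEdge n b a)) : cD n a b = ⊤ :=
  iInf_neg h

lemma cD_eq_or_eq_top (n : ℕ) (a b : Vert n) :
    cD n a b = ENNReal.ofReal ((1 / 2 : ℝ) ^ n) ∨ cD n a b = ⊤ :=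
  (em _).imp cD_of_edge cD_of_not_edge

lemma wCost_comm (ε : ℝ) (n : ℕ) (a b : Vert n) : wCost ε n a b = wCost ε n b a :=
  iInf_congr fun _ => by rw [or_comm]

lemma wCost_le_of_edgeAt {ε : ℝ} {n k : ℕ} {u v : Vert n} (h : edgeAt n k u v) :
    wCost ε n u v ≤ ENNReal.ofReal ((1 / 2 + ε) ^ k) :=
  iInf₂_le k (Or.inl h)

lemma edistD_self (n : ℕ) (a : Vert n) : edistD n a a = 0 := spDist_self _ a

lemma edistW_self (ε : ℝ) (n : ℕ) (a : Vert n) : edistW ε n a a = 0 := spDist_self _ a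

lemma edistD_comm (n : ℕ) (a b : Vert n) : edistD n a b = edistD n b a :=
  spDist_comm _ (cD_comm n) a b

lemma edistW_comm (ε : ℝ) (n : ℕ) (a b : Vert n) : edistW ε n a b = edistW ε n b a :=
  spDist_comm _ (wCost_comm ε n) a b

lemma edistD_triangle (n : ℕ) (a b c : Vert n) : edistD n a c ≤ edistD n a b + edistD n b c :=
  spDist_triangle _ a b c

lemma edistW_triangle (ε : ℝ) (n : ℕ) (a b c : Vert n) :
    edistW ε n a c ≤ edistW ε n a b + edistW ε n b c :=
  spDist_triangle _ a b c

lemma edistD_le_of_dEdge {n : ℕ} {a b : Vert n} (h : dEdge n a b) :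
    edistD n a b ≤ ENNReal.ofReal ((1 / 2 : ℝ) ^ n) :=
  (spDist_le_cost _ a b).trans (iInf_le _ (Or.inl h))

lemma edistW_le_of_edgeAt {ε : ℝ} {n k : ℕ} {a b : Vert n} (h : edgeAt n k a b) :
    edistW ε n a b ≤ ENNReal.ofReal ((1 / 2 + ε) ^ k) :=
  (spDist_le_cost _ a b).trans (wCost_le_of_edgeAt h)

lemma ofReal_half_pow_succ_add_self (n : ℕ) :
    ENNReal.ofReal ((1 / 2 : ℝ) ^ (n + 1)) + ENNReal.ofReal ((1 / 2 : ℝ) ^ (n + 1))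
      = ENNReal.ofReal ((1 / 2 : ℝ) ^ n) := by
  rw [← ENNReal.ofReal_add (by positivity) (by positivity)]
  ring_nf

lemma edistD_up_up_le_of_dEdge {n : ℕ} {a b : Vert n} (h : dEdge n a b) :
    edistD (n + 1) (up a) (up b) ≤ ENNReal.ofReal ((1 / 2 : ℝ) ^ n) := by
  let e : EdgeT n := ⟨(a, b), h⟩
  calc edistD (n + 1) (up a) (up b)
      ≤ edistD (n + 1) (up a) (mid e true) + edistD (n + 1) (mid e true) (up b) :=
        edistD_triangle _ _ _ _
    _ ≤ ENNReal.ofReal ((1 / 2 : ℝ) ^ (n + 1)) + ENNReal.ofReal ((1 / 2 : ℝ) ^ (n + 1)) :=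
        add_le_add (edistD_le_of_dEdge (dEdge_up_mid e true))
          (edistD_le_of_dEdge (dEdge_mid_up e true))
    _ = ENNReal.ofReal ((1 / 2 : ℝ) ^ n) := ofReal_half_pow_succ_add_self n

lemma edistD_up_le (n : ℕ) (u v : Vert n) : edistD (n + 1) (up u) (up v) ≤ edistD n u v := by
  refine le_spDist _ (φ := fun a b => edistD (n + 1) (up a) (up b)) (fun a => edistD_self _ _)
    (fun a b d => edistD_triangle _ _ _ _) (fun a b => le_iInf fun h => ?_) u v
  rcases h with h | h
  · exact edistD_up_up_le_of_dEdge h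
  · exact (edistD_comm _ _ _).trans_le (edistD_up_up_le_of_dEdge h)

lemma edistW_up_le (ε : ℝ) (n : ℕ) (u v : Vert n) :
    edistW ε (n + 1) (up u) (up v) ≤ edistW ε n u v := by
  refine le_spDist _ (φ := fun a b => edistW ε (n + 1) (up a) (up b))
    (fun a => edistW_self _ _ _) (fun a b d => edistW_triangle _ _ _ _ _)
    (fun a b => le_iInf₂ fun k h => ?_) u v
  rcases h with h | h
  · exact edistW_le_of_edgeAt (edgeAt_up h)
  · exact (edistW_comm _ _ _ _).trans_le (edistW_le_of_edgeAt (edgeAt_up h))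

lemma edistD_le_of_edgeAt : ∀ {n k : ℕ} {u v : Vert n}, edgeAt n k u v →
    edistD n u v ≤ ENNReal.ofReal ((1 / 2 : ℝ) ^ k)
  | 0, _, _, _, ⟨rfl, h⟩ => edistD_le_of_dEdge h
  | _ + 1, _, _, _, .inl ⟨rfl, h⟩ => edistD_le_of_dEdge h
  | n + 1, _, _, _, .inr ⟨u, v, rfl, rfl, h⟩ => (edistD_up_le n u v).trans (edistD_le_of_edgeAt h)

def foot {n : ℕ} (x : Vert (n + 1)) (i : Bool) : Vert n :=
  match x with
  | .inl u => u
  | .inr (e, _) => cond i e.1.1 e.1.2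

def height {n : ℕ} (x : Vert (n + 1)) : ℝ≥0∞ :=
  match x with
  | .inl _ => 0
  | .inr _ => ENNReal.ofReal ((1 / 2 : ℝ) ^ (n + 1))

lemma foot_up {n : ℕ} (u : Vert n) (i : Bool) : foot (up u) i = u := rfl

lemma foot_mid {n : ℕ} (e : EdgeT n) (b i : Bool) : foot (mid e b) i = cond i e.1.1 e.1.2 := rfl

lemma height_up {n : ℕ} (u : Vert n) : height (up u) = 0 := rfl

lemma height_mid {n : ℕ} (e : EdgeT n) (b : Bool) :
    height (mid e b) = ENNReal.ofReal ((1 / 2 : ℝ) ^ (n + 1)) := rfl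

def footDist {n : ℕ} (x y : Vert (n + 1)) : ℝ≥0∞ :=
  ⨅ p : Bool × Bool, edistD n (foot x p.1) (foot y p.2)

/-- A lower bound for `edistD (n + 1)`: walk to the nearest vertices of `D n`, paying `height` at
each end, and use `edistD n` in between. -/
def liftDist {n : ℕ} (x y : Vert (n + 1)) : ℝ≥0∞ :=
  if x = y then 0 else footDist x y + height x + height y

lemma liftDist_self {n : ℕ} (x : Vert (n + 1)) : liftDist x x = 0 := if_pos rfl

lemma liftDist_of_ne {n : ℕ} {x y : Vert (n + 1)} (h : x ≠ y) :
    liftDist x y = footDist x y + height x + height y := if_neg h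

lemma edistD_foot_foot_le {n : ℕ} (y : Vert (n + 1)) (i j : Bool) :
    edistD n (foot y i) (foot y j) ≤ height y + height y := by
  rcases Vert.succ_cases y with ⟨u, rfl⟩ | ⟨e, b, rfl⟩
  · exact (edistD_self n u).trans_le zero_le
  · rw [foot_mid, foot_mid, height_mid, ofReal_half_pow_succ_add_self]
    have h₁₂ := edistD_le_of_dEdge e.2
    cases i <;> cases j
    all_goals first
      | exact (edistD_self _ _).trans_le zero_le
      | exact h₁₂
      | exact (edistD_comm _ _ _).trans_le h₁₂

lemma footDist_comm {n : ℕ} (x y : Vert (n + 1)) : footDist x y = footDist y x :=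
  (Equiv.prodComm Bool Bool).iInf_congr fun _ => edistD_comm n _ _

lemma footDist_triangle {n : ℕ} (x y z : Vert (n + 1)) :
    footDist x z ≤ footDist x y + (footDist y z + (height y + height y)) := by
  change footDist x z ≤ footDist x y
    + ((⨅ q : Bool × Bool, edistD n (foot y q.1) (foot z q.2)) + (height y + height y))
  rw [ENNReal.iInf_add]
  refine ENNReal.le_iInf_add_iInf fun p q => ?_
  calc footDist x z ≤ edistD n (foot x p.1) (foot z q.2) := iInf_le _ (p.1, q.2)
    _ ≤ edistD n (foot x p.1) (foot y p.2)
          + (edistD n (foot y p.2) (foot y q.1) + edistD n (foot y q.1) (foot z q.2)) :=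
        (edistD_triangle _ _ _ _).trans (by gcongr; exact edistD_triangle _ _ _ _)
    _ ≤ _ := by
        rw [add_comm (edistD n (foot y p.2) (foot y q.1))]
        gcongr
        exact edistD_foot_foot_le y p.2 q.1

lemma liftDist_comm {n : ℕ} (x y : Vert (n + 1)) : liftDist x y = liftDist y x := by
  by_cases h : x = y
  · rw [h]
  · rw [liftDist_of_ne h, liftDist_of_ne (Ne.symm h), footDist_comm, add_right_comm]

lemma liftDist_triangle {n : ℕ} (x y z : Vert (n + 1)) :
    liftDist x z ≤ liftDist x y + liftDist y z := by
  by_cases hxz : x = z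
  · rw [hxz, liftDist_self]; exact zero_le
  by_cases hxy : x = y
  · rw [hxy, liftDist_self, zero_add]
  by_cases hyz : y = z
  · rw [hyz, liftDist_self, add_zero]
  rw [liftDist_of_ne hxz, liftDist_of_ne hxy, liftDist_of_ne hyz]
  calc footDist x z + height x + height z
      ≤ footDist x y + (footDist y z + (height y + height y)) + height x + height z := by
        gcongr; exact footDist_triangle x y z
    _ = _ := by ring

lemma liftDist_up_up {n : ℕ} (u v : Vert n) : liftDist (up u) (up v) = edistD n u v := by
  by_cases h : u = v
  · rw [h, liftDist_self, edistD_self]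
  · rw [liftDist_of_ne (up_injective.ne h), height_up, height_up, add_zero, add_zero]
    simp only [footDist, foot_up, iInf_const]

lemma liftDist_le_of_dEdge {n : ℕ} {x y : Vert (n + 1)} (h : dEdge (n + 1) x y) :
    liftDist x y ≤ ENNReal.ofReal ((1 / 2 : ℝ) ^ (n + 1)) := by
  obtain ⟨e, b, ⟨rfl, rfl⟩ | ⟨rfl, rfl⟩⟩ := dEdge_succ_cases h
  · have h₀ : footDist (up e.1.1) (mid e b) = 0 :=
      nonpos_iff_eq_zero.1 ((iInf_le _ (true, true)).trans_eq (edistD_self _ _))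
    rw [liftDist_of_ne (up_ne_mid _ e b), h₀, height_up, height_mid, zero_add, zero_add]
  · have h₀ : footDist (mid e b) (up e.1.2) = 0 :=
      nonpos_iff_eq_zero.1 ((iInf_le _ (false, false)).trans_eq (edistD_self _ _))
    rw [liftDist_of_ne (up_ne_mid _ e b).symm, h₀, height_up, height_mid, zero_add, add_zero]

lemma liftDist_le_cD {n : ℕ} (x y : Vert (n + 1)) : liftDist x y ≤ cD (n + 1) x y := by
  refine le_iInf fun h => ?_
  rcases h with h | h
  · exact liftDist_le_of_dEdge h
  · exact (liftDist_comm x y).trans_le (liftDist_le_of_dEdge h)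

lemma edistD_le_up (n : ℕ) (u v : Vert n) : edistD n u v ≤ edistD (n + 1) (up u) (up v) :=
  liftDist_up_up u v ▸
    le_spDist _ (φ := liftDist) liftDist_self liftDist_triangle liftDist_le_cD _ _

lemma edistD_up (n : ℕ) (u v : Vert n) : edistD (n + 1) (up u) (up v) = edistD n u v :=
  le_antisymm (edistD_up_le n u v) (edistD_le_up n u v)

def incl (m : ℕ) : (j : ℕ) → Vert m → Vert (m + j)
  | 0, x => x
  | j + 1, x => up (incl m j x)

def proj (m : ℕ) : (j : ℕ) → Vert (m + j) → Vert m
  | 0, x => x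
  | j + 1, x => proj m j (foot x true)

lemma edistD_incl (m : ℕ) : ∀ (j : ℕ) (u v : Vert m),
    edistD (m + j) (incl m j u) (incl m j v) = edistD m u v
  | 0, _, _ => rfl
  | j + 1, u, v => (edistD_up (m + j) _ _).trans (edistD_incl m j u v)

lemma edistW_incl_le (ε : ℝ) (m : ℕ) : ∀ (j : ℕ) (u v : Vert m),
    edistW ε (m + j) (incl m j u) (incl m j v) ≤ edistW ε m u v
  | 0, _, _ => le_rfl
  | j + 1, u, v => (edistW_up_le ε (m + j) _ _).trans (edistW_incl_le ε m j u v)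

lemma dist_incl_proj_le {δ : (n : ℕ) → Vert n → Vert n → ℝ≥0∞} {r : ℝ} (hr : 0 ≤ r)
    (hself : ∀ n a, δ n a a = 0) (htri : ∀ n a b c, δ n a c ≤ δ n a b + δ n b c)
    (hup : ∀ n u v, δ (n + 1) (up u) (up v) ≤ δ n u v)
    (hfoot : ∀ n (x : Vert (n + 1)), δ (n + 1) x (up (foot x true)) ≤ ENNReal.ofReal (r ^ (n + 1)))
    (m : ℕ) : ∀ (j : ℕ) (x : Vert (m + j)),
      δ (m + j) x (incl m j (proj m j x)) ≤ ENNReal.ofReal (∑ i ∈ Finset.range j, r ^ (m + 1 + i))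
  | 0, x => by simp [incl, proj, hself]
  | j + 1, x => by
    calc δ (m + j + 1) x (up (incl m j (proj m j (foot x true))))
        ≤ δ (m + j + 1) x (up (foot x true))
          + δ (m + j + 1) (up (foot x true)) (up (incl m j (proj m j (foot x true)))) :=
          htri _ _ _ _
      _ ≤ ENNReal.ofReal (r ^ (m + j + 1))
          + ENNReal.ofReal (∑ i ∈ Finset.range j, r ^ (m + 1 + i)) :=
          add_le_add (hfoot _ x)
            ((hup _ _ _).trans (dist_incl_proj_le hr hself htri hup hfoot m j _))
      _ = ENNReal.ofReal (∑ i ∈ Finset.range (j + 1), r ^ (m + 1 + i)) := by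
          rw [← ENNReal.ofReal_add (by positivity) (by positivity), Finset.sum_range_succ,
            add_comm, add_right_comm m j 1]

lemma eq_or_dEdge_up_foot {n : ℕ} (x : Vert (n + 1)) :
    x = up (foot x true) ∨ dEdge (n + 1) (up (foot x true)) x := by
  rcases Vert.succ_cases x with ⟨u, rfl⟩ | ⟨e, b, rfl⟩
  · exact Or.inl rfl
  · exact Or.inr (dEdge_up_mid e b)

lemma edistD_incl_proj_le (m j : ℕ) (x : Vert (m + j)) :
    edistD (m + j) x (incl m j (proj m j x))
      ≤ ENNReal.ofReal (∑ i ∈ Finset.range j, (1 / 2 : ℝ) ^ (m + 1 + i)) := by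
  refine dist_incl_proj_le (by norm_num) edistD_self edistD_triangle edistD_up_le
    (fun n x => ?_) m j x
  rcases eq_or_dEdge_up_foot x with h | h
  · rw [← h, edistD_self]; exact zero_le
  · exact (edistD_comm _ _ _).trans_le (edistD_le_of_dEdge h)

lemma edistW_incl_proj_le {ε : ℝ} (hε : 0 ≤ ε) (m j : ℕ) (x : Vert (m + j)) :
    edistW ε (m + j) x (incl m j (proj m j x))
      ≤ ENNReal.ofReal (∑ i ∈ Finset.range j, (1 / 2 + ε) ^ (m + 1 + i)) := by
  refine dist_incl_proj_le (by positivity) (edistW_self ε) (edistW_triangle ε)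
    (edistW_up_le ε) (fun n x => ?_) m j x
  rcases eq_or_dEdge_up_foot x with h | h
  · rw [← h, edistW_self]; exact zero_le
  · exact (edistW_comm _ _ _ _).trans_le (edistW_le_of_edgeAt (edgeAt_self h))

lemma edistD_zero_le_one (z z' : Vert 0) : edistD 0 z z' ≤ 1 := by
  by_cases h : z = z'
  · rw [h, edistD_self]; exact zero_le
  · rcases dEdge_zero_of_ne h with h | h
    · simpa using edistD_le_of_dEdge h
    · simpa [edistD_comm] using edistD_le_of_dEdge h

lemma edistD_le_add_add (n : ℕ) (x y a b : Vert n) :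
    edistD n x y ≤ edistD n x a + edistD n a b + edistD n y b :=
  spDist_le_add_add _ (cD_comm n) x y a b

lemma edistW_le_add_add (ε : ℝ) (n : ℕ) (x y a b : Vert n) :
    edistW ε n x y ≤ edistW ε n x a + edistW ε n a b + edistW ε n y b :=
  spDist_le_add_add _ (wCost_comm ε n) x y a b

lemma edistD_ne_top (n : ℕ) (x y : Vert n) : edistD n x y ≠ ⊤ := by
  obtain ⟨j, rfl⟩ : ∃ j, n = 0 + j := ⟨n, (zero_add n).symm⟩
  refine ne_top_of_le_ne_top ?_ (edistD_le_add_add _ x y (incl 0 j (proj 0 j x))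
    (incl 0 j (proj 0 j y)))
  rw [edistD_incl]
  exact ENNReal.add_ne_top.2 ⟨ENNReal.add_ne_top.2
    ⟨ne_top_of_le_ne_top ENNReal.ofReal_ne_top (edistD_incl_proj_le 0 j x),
      ne_top_of_le_ne_top ENNReal.one_ne_top (edistD_zero_le_one _ _)⟩,
    ne_top_of_le_ne_top ENNReal.ofReal_ne_top (edistD_incl_proj_le 0 j y)⟩

lemma le_edistD_of_ne {n : ℕ} {x y : Vert n} (h : x ≠ y) :
    ENNReal.ofReal ((1 / 2 : ℝ) ^ n) ≤ edistD n x y :=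
  le_spDist_of_ne _ (fun a b => by rcases cD_eq_or_eq_top n a b with h | h <;> simp [h]) h

lemma edistW_le_mul_edistD {ε : ℝ} (hε : 0 ≤ ε) (m : ℕ) (z z' : Vert m) :
    edistW ε m z z' ≤ ENNReal.ofReal ((1 + 2 * ε) ^ m) * edistD m z z' := by
  have ht₀ : ENNReal.ofReal ((1 + 2 * ε) ^ m) ≠ 0 := (ENNReal.ofReal_pos.2 (by positivity)).ne'
  refine spDist_le_mul_spDist _ ht₀ ENNReal.ofReal_ne_top (fun a b => ?_) z z'
  by_cases h : dEdge m a b ∨ dEdge m b a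
  swap
  · rw [cD_of_not_edge h, ENNReal.mul_top ht₀]; exact le_top
  rw [cD_of_edge h, ← ENNReal.ofReal_mul (by positivity), ← mul_pow,
    show (1 + 2 * ε) * (1 / 2) = 1 / 2 + ε by ring]
  rcases h with h | h
  · exact wCost_le_of_edgeAt (edgeAt_self h)
  · exact (wCost_comm _ _ _ _).trans_le (wCost_le_of_edgeAt (edgeAt_self h))

lemma geom_tail_lt {r : ℝ} (hr₀ : 0 < r) (hr₁ : r < 1) (m j : ℕ) :
    ∑ i ∈ Finset.range j, r ^ (m + 1 + i) < r ^ (m + 1) / (1 - r) := by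
  rw [lt_div_iff₀ (sub_pos.2 hr₁)]
  simp_rw [pow_add r (m + 1)]
  rw [← Finset.mul_sum, mul_assoc, mul_comm _ (1 - r), mul_neg_geom_sum]
  have : 0 < r ^ j := pow_pos hr₀ j
  have : 0 < r ^ (m + 1) := pow_pos hr₀ _
  nlinarith

lemma exists_pow_succ_lt_le {r d : ℝ} (hr₀ : 0 < r) (hr₁ : r < 1) {n : ℕ} (hd : r ^ n ≤ d) :
    ∃ m ≤ n, r ^ (m + 1) < d ∧ (m = 0 ∨ d ≤ r ^ m) := by
  classical
  have hn : r ^ (n + 1) < d := (pow_lt_pow_right_of_lt_one₀ hr₀ hr₁ n.lt_succ_self).trans_le hd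
  have hex : ∃ m, r ^ (m + 1) < d := ⟨n, hn⟩
  refine ⟨Nat.find hex, Nat.find_min' hex hn, Nat.find_spec hex, ?_⟩
  rcases Nat.eq_zero_or_pos (Nat.find hex) with h₀ | hpos
  · exact Or.inl h₀
  · have hmin := Nat.find_min hex (Nat.sub_one_lt_of_lt hpos)
    rw [Nat.sub_add_cancel hpos, not_lt] at hmin
    exact Or.inr hmin

lemma half_pow_rpow {ε α : ℝ} (hα : (1 / 2 : ℝ) ^ α = 1 / 2 + ε) (j : ℕ) :
    ((1 / 2 : ℝ) ^ j) ^ α = (1 / 2 + ε) ^ j := by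
  rw [← Real.rpow_natCast, ← Real.rpow_mul (by norm_num), mul_comm, Real.rpow_mul (by norm_num),
    hα, Real.rpow_natCast]

lemma edistD_proj_le (m j : ℕ) (x y : Vert (m + j))
    (h : m = 0 ∨ edistD (m + j) x y ≤ ENNReal.ofReal ((1 / 2 : ℝ) ^ m)) :
    edistD m (proj m j x) (proj m j y) ≤ ENNReal.ofReal (2 * (1 / 2 : ℝ) ^ m) := by
  rcases h with rfl | h
  · exact (edistD_zero_le_one _ _).trans (by norm_num)
  set S := ∑ i ∈ Finset.range j, (1 / 2 : ℝ) ^ (m + 1 + i)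
  have hS : S < (1 / 2) ^ m := by
    convert geom_tail_lt (r := 1 / 2) (by norm_num) (by norm_num) m j using 1
    ring
  have hS₀ : 0 ≤ S := by positivity
  have hw₀ : ENNReal.ofReal ((1 / 2 : ℝ) ^ m) ≠ 0 := by simp
  have hlt : edistD m (proj m j x) (proj m j y)
      < ((2 : ℕ) + 1) * ENNReal.ofReal ((1 / 2 : ℝ) ^ m) := by
    calc edistD m (proj m j x) (proj m j y)
        = edistD (m + j) (incl m j (proj m j x)) (incl m j (proj m j y)) :=
          (edistD_incl m j _ _).symm
      _ ≤ edistD (m + j) (incl m j (proj m j x)) x + edistD (m + j) x y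
          + edistD (m + j) (incl m j (proj m j y)) y := edistD_le_add_add _ _ _ _ _
      _ ≤ ENNReal.ofReal S + ENNReal.ofReal ((1 / 2 : ℝ) ^ m) + ENNReal.ofReal S := by
          rw [edistD_comm _ (incl m j _) x, edistD_comm _ (incl m j _) y]
          gcongr
          exacts [edistD_incl_proj_le m j x, edistD_incl_proj_le m j y]
      _ = ENNReal.ofReal (S + (1 / 2 : ℝ) ^ m + S) := by
          rw [ENNReal.ofReal_add (by positivity) hS₀, ENNReal.ofReal_add hS₀ (by positivity)]
      _ < ENNReal.ofReal (3 * (1 / 2 : ℝ) ^ m) :=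
          (ENNReal.ofReal_lt_ofReal_iff (by positivity)).2 (by linarith)
      _ = ((2 : ℕ) + 1) * ENNReal.ofReal ((1 / 2 : ℝ) ^ m) := by
          rw [ENNReal.ofReal_mul (by norm_num)]; norm_num
  -- `D m`-distances are multiples of `(1/2)^m`, so `< 3 (1/2)^m` improves to `≤ 2 (1/2)^m`.
  refine (spDist_le_of_lt_succ_mul _ hw₀ ENNReal.ofReal_ne_top (cD_eq_or_eq_top m) hlt).trans_eq ?_
  rw [ENNReal.ofReal_mul (by norm_num)]
  norm_num

lemma two_mul_pow_div_add_two_mul_pow {ε : ℝ} (hε₀ : 0 ≤ ε) (hε : ε < 1 / 2) (m : ℕ) :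
    2 * ((1 / 2 + ε) ^ (m + 1) / (1 / 2 - ε)) + 2 * (1 / 2 + ε) ^ m
      = 8 / (1 - 4 * ε ^ 2) * (1 / 2 + ε) ^ (m + 1) := by
  have hs : 1 / 2 - ε ≠ 0 := by linarith
  have h4 : 1 - 4 * ε ^ 2 ≠ 0 := by nlinarith
  rw [div_mul_eq_mul_div, mul_div_assoc', div_add' _ _ _ hs, div_eq_div_iff hs h4, pow_succ]
  ring

lemma edistW_le_of_edistD_le {ε : ℝ} (hε₀ : 0 ≤ ε) (hε : ε < 1 / 2) (m j : ℕ) (x y : Vert (m + j))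
    (h : m = 0 ∨ edistD (m + j) x y ≤ ENNReal.ofReal ((1 / 2 : ℝ) ^ m)) :
    edistW ε (m + j) x y ≤ ENNReal.ofReal (8 / (1 - 4 * ε ^ 2) * (1 / 2 + ε) ^ (m + 1)) := by
  set S := ∑ i ∈ Finset.range j, (1 / 2 + ε) ^ (m + 1 + i)
  have hS : S ≤ (1 / 2 + ε) ^ (m + 1) / (1 / 2 - ε) := by
    have htail := (geom_tail_lt (r := 1 / 2 + ε) (by linarith) (by linarith) m j).le
    rwa [show 1 - (1 / 2 + ε) = 1 / 2 - ε by ring] at htail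
  have hS₀ : 0 ≤ S := by positivity
  have hmid : edistW ε m (proj m j x) (proj m j y) ≤ ENNReal.ofReal (2 * (1 / 2 + ε) ^ m) := by
    calc edistW ε m (proj m j x) (proj m j y)
        ≤ ENNReal.ofReal ((1 + 2 * ε) ^ m) * ENNReal.ofReal (2 * (1 / 2 : ℝ) ^ m) :=
          (edistW_le_mul_edistD hε₀ m _ _).trans (by gcongr; exact edistD_proj_le m j x y h)
      _ = ENNReal.ofReal (2 * (1 / 2 + ε) ^ m) := by
          rw [← ENNReal.ofReal_mul (by positivity), mul_left_comm, ← mul_pow,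
            show (1 + 2 * ε) * (1 / 2) = 1 / 2 + ε by ring]
  calc edistW ε (m + j) x y
      ≤ edistW ε (m + j) x (incl m j (proj m j x))
        + edistW ε (m + j) (incl m j (proj m j x)) (incl m j (proj m j y))
        + edistW ε (m + j) y (incl m j (proj m j y)) := edistW_le_add_add _ _ _ _ _ _
    _ ≤ ENNReal.ofReal S + ENNReal.ofReal (2 * (1 / 2 + ε) ^ m) + ENNReal.ofReal S := by
        gcongr
        exacts [edistW_incl_proj_le hε₀ m j x, (edistW_incl_le ε m j _ _).trans hmid,
          edistW_incl_proj_le hε₀ m j y]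
    _ = ENNReal.ofReal (S + 2 * (1 / 2 + ε) ^ m + S) := by
        rw [ENNReal.ofReal_add (by positivity) hS₀, ENNReal.ofReal_add hS₀ (by positivity)]
    _ ≤ ENNReal.ofReal (8 / (1 - 4 * ε ^ 2) * (1 / 2 + ε) ^ (m + 1)) := by
        rw [← two_mul_pow_div_add_two_mul_pow hε₀ hε m]
        exact ENNReal.ofReal_le_ofReal (by linarith)

lemma edistW_le_rpow_edistD {ε α : ℝ} (hε₀ : 0 ≤ ε) (hε : ε < 1 / 2) (hα₀ : 0 < α)
    (hα : (1 / 2 : ℝ) ^ α = 1 / 2 + ε) (n : ℕ) (x y : Vert n) :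
    edistW ε n x y ≤ ENNReal.ofReal (8 / (1 - 4 * ε ^ 2) * (edistD n x y).toReal ^ α) := by
  by_cases hxy : x = y
  · rw [hxy, edistW_self]; exact zero_le
  set d := (edistD n x y).toReal
  have hd : (1 / 2 : ℝ) ^ n ≤ d :=
    (ENNReal.ofReal_le_iff_le_toReal (edistD_ne_top n x y)).1 (le_edistD_of_ne hxy)
  obtain ⟨m, hmn, hlt, hle⟩ := exists_pow_succ_lt_le (by norm_num) (by norm_num) hd
  obtain ⟨j, rfl⟩ := Nat.exists_eq_add_of_le hmn
  refine (edistW_le_of_edistD_le hε₀ hε m j x y (hle.imp_right fun h => ?_)).trans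
    (ENNReal.ofReal_le_ofReal ?_)
  · exact (ENNReal.le_ofReal_iff_toReal_le (edistD_ne_top _ x y) (by positivity)).2 h
  · have : 0 < 1 - 4 * ε ^ 2 := by nlinarith
    gcongr
    rw [← half_pow_rpow hα]
    exact Real.rpow_le_rpow (by positivity) hlt.le hα₀.le

lemma rpow_edistD_le_edistW {ε α : ℝ} (hα₀ : 0 < α) (hα₁ : α ≤ 1)
    (hα : (1 / 2 : ℝ) ^ α = 1 / 2 + ε) (n : ℕ) (x y : Vert n) :
    edistD n x y ^ α ≤ edistW ε n x y := by
  refine le_spDist _ (φ := fun a b => edistD n a b ^ α) (fun a => ?_) (fun a b c => ?_)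
    (fun a b => le_iInf₂ fun k h => ?_) x y
  · simp [edistD_self, hα₀]
  · exact (ENNReal.rpow_le_rpow (edistD_triangle n a b c) hα₀.le).trans
      (ENNReal.rpow_add_le_add_rpow _ _ hα₀.le hα₁)
  · have hk : edistD n a b ≤ ENNReal.ofReal ((1 / 2 : ℝ) ^ k) := by
      rcases h with h | h
      · exact edistD_le_of_edgeAt h
      · exact (edistD_comm _ _ _).trans_le (edistD_le_of_edgeAt h)
    calc edistD n a b ^ α ≤ ENNReal.ofReal ((1 / 2 : ℝ) ^ k) ^ α :=
          ENNReal.rpow_le_rpow hk hα₀.le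
      _ = ENNReal.ofReal ((1 / 2 + ε) ^ k) := by
          rw [ENNReal.ofReal_rpow_of_nonneg (by positivity) hα₀.le, half_pow_rpow hα]

/-- Let `ε ∈ (0, 1/2)` and let `α ∈ (0, 1)` be defined by
`(1/2)^α = 1/2 + ε`.  Then for all vertices `x, y` of `D k` :
`(d_{D_k}(x,y))^α ≤ d_{W_k}(x,y) ≤ (8/(1 - 4ε²)) * (d_{D_k}(x,y))^α`,
i.e., the identity maps from the weighted diamonds `W k` to the `α`-snowflakes of the
diamonds `D k` have uniformly bounded distortion. -/
theorem statement8 (ε : ℝ) (hε0 : 0 < ε) (hε : ε < 1 / 2)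
    (α : ℝ) (hα0 : 0 < α) (hα1 : α < 1) (hα : (1 / 2 : ℝ) ^ α = 1 / 2 + ε)
    (k : ℕ) (x y : Vert k) :
    dD k x y ^ α ≤ dW ε k x y ∧ dW ε k x y ≤ 8 / (1 - 4 * ε ^ 2) * dD k x y ^ α := by
  have hupper := edistW_le_rpow_edistD hε0.le hε hα0 hα k x y
  have hW : edistW ε k x y ≠ ⊤ := ne_top_of_le_ne_top ENNReal.ofReal_ne_top hupper
  have h4 : 0 < 1 - 4 * ε ^ 2 := by nlinarith
  rw [dD_eq_toReal, dW_eq_toReal]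
  constructor
  · rw [ENNReal.toReal_rpow]
    exact ENNReal.toReal_mono hW (rpow_edistD_le_edistW hα0 hα1.le hα k x y)
  · exact ENNReal.toReal_le_of_le_ofReal (by positivity) hupper

end Stmt
end
end

section
/- For every m ≥ 1, the unit sphere of every m-dimensional real Banach space contains 2·4^{m−1} points with pairwise distances at least 1/16. -/
/-!
A maximal `1/16`-separated subset `T` of the unit sphere is a `1/16`-net of it, so, projecting
radially onto the sphere, the closed balls of radius `1/8` around `T` cover the shell
`15/16 ≤ ‖z‖ ≤ 1`. Comparing Haar measures gives `1 ≤ |T| (1/8)^m + (15/16)^m`, which forces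
`|T| ≥ 2 * 4^(m-1)` as soon as `m ≥ 2`. In dimension one the sphere is `{x, -x}`.
-/

universe u

open Metric Set MeasureTheory Module
open scoped NNReal ENNReal

namespace Metric

lemma packingNumber_ne_top_of_isCompact {X : Type*} [PseudoEMetricSpace X] {A : Set X}
    (hA : IsCompact A) {ε : ℝ≥0} (hε : ε ≠ 0) : packingNumber ε A ≠ ⊤ := by
  obtain ⟨C, -, hC_fin, hC⟩ := exists_finite_isCover_of_isCompact (half_pos hε.bot_lt).ne' hA
  have hpack := packingNumber_two_mul_le_externalCoveringNumber (ε / 2) A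
  rw [mul_div_cancel₀ _ two_ne_zero] at hpack
  exact ne_top_of_le_ne_top hC_fin.encard_lt_top.ne
    (hpack.trans hC.externalCoveringNumber_le_encard)

lemma IsSeparated.le_dist {X : Type*} [PseudoMetricSpace X] {ε : ℝ≥0} {s : Set X}
    (hs : IsSeparated ε s) : s.Pairwise (fun x y => ε ≤ dist x y) :=
  hs.mono' fun x y h => by
    rw [edist_dist, ← ENNReal.ofReal_coe_nnreal] at h
    exact (ENNReal.ofReal_lt_ofReal_iff_of_nonneg ε.2).mp h |>.le

end Metric

variable {E : Type*} [NormedAddCommGroup E] [NormedSpace ℝ E]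

lemma dist_self_inv_norm_smul (z : E) (hz : z ≠ 0) : dist z (‖z‖⁻¹ • z) = |‖z‖ - 1| := by
  have hz' : ‖z‖ ≠ 0 := norm_ne_zero_iff.mpr hz
  rw [dist_eq_norm, show z - ‖z‖⁻¹ • z = (1 - ‖z‖⁻¹) • z by rw [sub_smul, one_smul],
    norm_smul, Real.norm_eq_abs, ← abs_norm z, ← abs_mul, abs_norm, sub_mul,
    inv_mul_cancel₀ hz', one_mul]

lemma closedBall_subset_iUnion_closedBall_union_closedBall {T : Set E} {ε : ℝ≥0}
    (hT : IsCover ε (sphere 0 1) T) {δ : ℝ} (hδ : δ ≤ 1) :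
    closedBall (0 : E) 1 ⊆ (⋃ s ∈ T, closedBall s (ε + δ)) ∪ closedBall 0 (1 - δ) := by
  intro z hz
  rw [mem_closedBall_zero_iff] at hz
  rcases le_or_gt ‖z‖ (1 - δ) with hzδ | hzδ
  · exact Or.inr (mem_closedBall_zero_iff.mpr hzδ)
  have hz0 : z ≠ 0 := norm_pos_iff.mp (by linarith)
  have hu : ‖z‖⁻¹ • z ∈ sphere (0 : E) 1 := mem_sphere_zero_iff_norm.mpr (norm_smul_inv_norm hz0)
  obtain ⟨s, hsT, hs⟩ := mem_iUnion₂.mp (hT.subset_iUnion_closedBall hu)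
  refine Or.inl (mem_iUnion₂.mpr ⟨s, hsT, mem_closedBall.mpr ?_⟩)
  calc dist z s ≤ dist z (‖z‖⁻¹ • z) + dist (‖z‖⁻¹ • z) s := dist_triangle _ _ _
    _ ≤ δ + ε := by
      rw [dist_self_inv_norm_smul z hz0, abs_of_nonpos (by linarith)]
      exact add_le_add (by linarith) (mem_closedBall.mp hs)
    _ = ε + δ := add_comm _ _

lemma one_le_ncard_mul_pow_add_pow [FiniteDimensional ℝ E] {T : Set E} (hT : T.Finite)
    {r ρ : ℝ} (hr : 0 ≤ r) (hρ : 0 ≤ ρ)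
    (hcover : closedBall (0 : E) 1 ⊆ (⋃ s ∈ T, closedBall s r) ∪ closedBall 0 ρ) :
    1 ≤ T.ncard * r ^ finrank ℝ E + ρ ^ finrank ℝ E := by
  borelize E
  set μ : Measure E := Measure.addHaar
  set V := μ (ball 0 1)
  have hV0 : V ≠ 0 := (measure_ball_pos μ 0 one_pos).ne'
  have hVtop : V ≠ ⊤ := measure_ball_lt_top.ne
  rw [← hT.coe_toFinset] at hcover
  simp only [Finset.mem_coe] at hcover
  have hμ : V ≤ ENNReal.ofReal (T.ncard * r ^ finrank ℝ E + ρ ^ finrank ℝ E) * V :=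
    calc V ≤ μ (closedBall 0 1) := measure_mono ball_subset_closedBall
      _ ≤ μ (⋃ s ∈ hT.toFinset, closedBall s r) + μ (closedBall 0 ρ) :=
        (measure_mono hcover).trans (measure_union_le _ _)
      _ ≤ ∑ s ∈ hT.toFinset, μ (closedBall s r) + μ (closedBall 0 ρ) :=
        add_le_add_left (measure_biUnion_finset_le _ _) _
      _ = ENNReal.ofReal (T.ncard * r ^ finrank ℝ E + ρ ^ finrank ℝ E) * V := by
        simp only [Measure.addHaar_closedBall μ _ hr, Measure.addHaar_closedBall μ _ hρ,
          Finset.sum_const, nsmul_eq_mul, ← Set.ncard_eq_toFinset_card T hT]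
        rw [ENNReal.ofReal_add (by positivity) (by positivity), ENNReal.ofReal_mul (by positivity),
          ENNReal.ofReal_natCast, add_mul, mul_assoc]
  rw [← ENNReal.one_le_ofReal, ← ENNReal.mul_le_mul_iff_left hV0 hVtop, one_mul]
  exact hμ

lemma two_mul_four_pow_le_of_one_le {m N : ℕ} (hm : 2 ≤ m)
    (h : 1 ≤ N * (1 / 8 : ℝ) ^ m + (15 / 16) ^ m) : 2 * 4 ^ (m - 1) ≤ N := by
  have key : ∀ m, 2 ≤ m → (2 * (4 : ℝ) ^ (m - 1) - 1) * (1 / 8) ^ m + (15 / 16) ^ m < 1 := by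
    intro m hm
    induction m, hm using Nat.le_induction with
    | base => norm_num
    | succ m hm ih =>
      obtain ⟨k, rfl⟩ : ∃ k, m = k + 1 := ⟨m - 1, by omega⟩
      simp only [Nat.add_sub_cancel] at ih ⊢
      rw [pow_succ (4 : ℝ), pow_succ (1 / 8 : ℝ), pow_succ (15 / 16 : ℝ)]
      have h8 : (0 : ℝ) < (1 / 8) ^ (k + 1) := by positivity
      have h4 : (1 : ℝ) ≤ 4 ^ k := one_le_pow₀ (by norm_num)
      nlinarith
  by_contra! hN
  have hN' : (N : ℝ) ≤ 2 * 4 ^ (m - 1) - 1 := by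
    have : ((N + 1 : ℕ) : ℝ) ≤ ((2 * 4 ^ (m - 1) : ℕ) : ℝ) := by exact_mod_cast hN
    push_cast at this
    linarith
  have := mul_le_mul_of_nonneg_right hN' (by positivity : (0 : ℝ) ≤ (1 / 8) ^ m)
  linarith [key m hm]

lemma exists_separated_subset_sphere_two_mul_four_pow_le_ncard [FiniteDimensional ℝ E]
    (hE : 2 ≤ finrank ℝ E) :
    ∃ T ⊆ sphere (0 : E) 1, T.Pairwise (fun x y => 1 / 16 ≤ ‖x - y‖) ∧
      2 * 4 ^ (finrank ℝ E - 1) ≤ T.ncard := by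
  set T := maximalSeparatedSet (1 / 16) (sphere (0 : E) 1)
  have htop := packingNumber_ne_top_of_isCompact (isCompact_sphere (0 : E) 1)
    (ε := 1 / 16) (by norm_num)
  have hT_fin : T.Finite := Set.encard_ne_top_iff.mp (encard_maximalSeparatedSet htop ▸ htop)
  have hcover := closedBall_subset_iUnion_closedBall_union_closedBall
    (isCover_maximalSeparatedSet htop) (δ := 1 / 16) (by norm_num)
  have hvol := one_le_ncard_mul_pow_add_pow hT_fin (by positivity) (by norm_num) hcover
  refine ⟨T, maximalSeparatedSet_subset, ?_, two_mul_four_pow_le_of_one_le hE ?_⟩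
  · refine isSeparated_maximalSeparatedSet.le_dist.mono' fun x y h => ?_
    rw [← dist_eq_norm]
    exact_mod_cast h
  · convert hvol using 4 <;> norm_num

lemma exists_antipodal_pair [Nontrivial E] :
    ∃ T ⊆ sphere (0 : E) 1, T.Pairwise (fun x y => 2 ≤ ‖x - y‖) ∧ T.ncard = 2 := by
  obtain ⟨x, hx⟩ := exists_norm_eq E zero_le_one
  have hdist : ‖x - -x‖ = 2 := by
    rw [sub_neg_eq_add, ← two_smul ℝ, norm_smul, hx]
    norm_num
  refine ⟨{x, -x}, ?_, Set.pairwise_pair.mpr fun _ => ⟨hdist.ge, ?_⟩, Set.ncard_pair ?_⟩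
  · rintro y (rfl | rfl) <;> simpa using hx
  · rw [norm_sub_rev, hdist]
  · intro h
    rw [← sub_eq_zero, ← norm_eq_zero, hdist] at h
    exact two_ne_zero h

namespace Stmt

/-- For every `m ≥ 1`, the unit sphere of every `m`-dimensional real
Banach space contains `2 * 4^(m-1)` points with pairwise distances at least `1/16`. -/
theorem statement17 (m : ℕ) (hm : 1 ≤ m)
    (X : Type u) [NormedAddCommGroup X] [NormedSpace ℝ X] [FiniteDimensional ℝ X]
    (hdim : Module.finrank ℝ X = m) :
    ∃ S : Set X, S.ncard = 2 * 4 ^ (m - 1) ∧ (∀ x ∈ S, ‖x‖ = 1) ∧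
      S.Pairwise (fun x y => 1 / 16 ≤ ‖x - y‖) := by
  obtain ⟨T, hT_sphere, hT_sep, hT_card⟩ : ∃ T ⊆ sphere (0 : X) 1,
      T.Pairwise (fun x y => 1 / 16 ≤ ‖x - y‖) ∧ 2 * 4 ^ (m - 1) ≤ T.ncard := by
    subst hdim
    rcases hm.eq_or_lt with h1 | h2
    · have : Nontrivial X := Module.nontrivial_of_finrank_eq_succ h1.symm
      obtain ⟨T, hT_sphere, hT_sep, hT_card⟩ := exists_antipodal_pair (E := X)
      exact ⟨T, hT_sphere, hT_sep.mono' fun x y h => by linarith, by rw [← h1, hT_card]; rfl⟩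
    · exact exists_separated_subset_sphere_two_mul_four_pow_le_ncard h2
  obtain ⟨S, hST, hS_card⟩ := Set.exists_subset_card_eq hT_card
  exact ⟨S, hS_card, fun x hx => mem_sphere_zero_iff_norm.mp (hT_sphere (hST hx)), hT_sep.mono hST⟩

end Stmt
end
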